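/- arXiv:2103.10586 — 6 statements merged into one kernel-verified Lean document; each statement's English description precedes it below -/
import Mathlib

section
/- Let X be a compact metrizable totally disconnected space and let a group Γ act on X by homeomorphisms. Then the action Γ ↷ X is conjugate (equivariantly homeomorphic) to the inverse limit of an inverse sequence of Γ-actions on finite sets (with surjective equivariant connecting maps) if and only if the action is equicontinuous (i.e., the image of Γ in the homeomorphism group of X is an equicontinuous family). -/
/-!
The coordinate partitions of an inverse limit of finite sets are clopen, invariant under the
action, and shrink to the diagonal; by compactness every entourage contains one of them, and the
action preserves it. This gives uniform equicontinuity.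

Conversely, for an equicontinuous action and an entourage `U`, join `x` and `y` whenever the
whole orbits of `x` and `y` stay `U`-close, and pass to the generated equivalence relation. Its
classes are open by uniform equicontinuity, hence finitely many, and `Γ` permutes them. Along a
countable antitone basis of entourages these partitions refine each other, and they separate
points: a compact totally disconnected space has clopen partitions separating any two points, and
each of them is an entourage.
The induced map to the inverse limit of the quotients is a continuous equivariant bijection from
a compact space onto a Hausdorff one.
-/

/-- The inverse limit of an inverse sequence of sets. -/
def InvLimit {E : ℕ → Type*} (p : ∀ n, E (n + 1) → E n) : Type _ :=
  { x : ∀ n, E n // ∀ n, p n (x (n + 1)) = x n }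

/-- The inverse limit of a sequence of finite (discrete) sets carries the topology
induced from the product of the discrete topologies. -/
instance InvLimit.instTopologicalSpace {E : ℕ → Type*} (p : ∀ n, E (n + 1) → E n) :
    TopologicalSpace (InvLimit p) :=
  letI : ∀ n, TopologicalSpace (E n) := fun _ => ⊥
  instTopologicalSpaceSubtype

open Function Set Uniformity

universe u v

namespace InvLimit

variable {E F : ℕ → Type*} {p : ∀ n, E (n + 1) → E n} {q : ∀ n, F (n + 1) → F n}
  {Y : Type*} [TopologicalSpace Y]

instance : T2Space (InvLimit p) :=
  letI : ∀ n, TopologicalSpace (E n) := fun _ => ⊥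
  haveI : ∀ n, DiscreteTopology (E n) := fun _ => ⟨rfl⟩
  inferInstanceAs (T2Space {x : ∀ n, E n // ∀ n, p n (x (n + 1)) = x n})

theorem continuous_iff {f : Y → InvLimit p} :
    Continuous f ↔ ∀ n, IsLocallyConstant fun y => (f y).1 n := by
  let : ∀ n, TopologicalSpace (E n) := fun _ => ⊥
  have : ∀ n, DiscreteTopology (E n) := fun _ => ⟨rfl⟩
  simp_rw [IsLocallyConstant.iff_continuous]
  exact continuous_induced_rng.trans continuous_pi_iff

theorem isLocallyConstant_apply (n : ℕ) : IsLocallyConstant fun x : InvLimit p => x.1 n :=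
  continuous_iff.1 continuous_id n

def lift (f : ∀ n, Y → E n) (hf : ∀ n y, p n (f (n + 1) y) = f n y) : Y → InvLimit p :=
  fun y => ⟨fun n => f n y, fun n => hf n y⟩

theorem surjective_lift [CompactSpace Y] {f : ∀ n, Y → E n}
    (hf : ∀ n y, p n (f (n + 1) y) = f n y) (hlc : ∀ n, IsLocallyConstant (f n))
    (hsurj : ∀ n, Surjective (f n)) : Surjective (lift f hf) := by
  intro z
  have hfiber_anti : ∀ n, {y | f (n + 1) y = z.1 (n + 1)} ⊆ {y | f n y = z.1 n} :=
    fun n y hy => by rw [mem_ofPred_eq, ← hf n y, ← z.2 n, hy]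
  obtain ⟨y, hy⟩ := IsCompact.nonempty_iInter_of_sequence_nonempty_isCompact_isClosed _
    hfiber_anti (fun n => hsurj n (z.1 n)) ((hlc 0).isClosed_fiber _).isCompact
    fun n => (hlc n).isClosed_fiber _
  exact ⟨y, Subtype.ext <| funext <| mem_iInter.1 hy⟩

def congr (e : ∀ n, E n ≃ F n) (he : ∀ n x, q n (e (n + 1) x) = e n (p n x)) :
    InvLimit p ≃ₜ InvLimit q where
  toFun := lift (fun n x => e n (x.1 n)) fun n x => by rw [he, x.2]
  invFun := lift (fun n y => (e n).symm (y.1 n)) fun n y => by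
    have h := he n ((e (n + 1)).symm (y.1 (n + 1)))
    rw [Equiv.apply_symm_apply, y.2] at h
    exact ((e n).symm_apply_eq.2 h).symm
  left_inv x := Subtype.ext <| funext fun n => (e n).symm_apply_apply _
  right_inv y := Subtype.ext <| funext fun n => (e n).apply_symm_apply _
  continuous_toFun := continuous_iff.2 fun n => (isLocallyConstant_apply n).comp _
  continuous_invFun := continuous_iff.2 fun n => (isLocallyConstant_apply n).comp _

@[simp]
theorem congr_apply_coe (e : ∀ n, E n ≃ F n) (he : ∀ n x, q n (e (n + 1) x) = e n (p n x))
    (x : InvLimit p) (n : ℕ) : (congr e he x).1 n = e n (x.1 n) :=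
  rfl

end InvLimit

/-- The universe `u` of the finite levels is a parameter because the natural levels, quotients of
`X`, live in the universe of `X`. -/
def ConjugateToOdometer (Γ : Type*) (X : Type*) [Group Γ] [TopologicalSpace X] [MulAction Γ X] :
    Prop :=
  ∃ (E : ℕ → Type u) (_ : ∀ n, Finite (E n)) (ρ : ∀ n, Γ →* Equiv.Perm (E n))
      (p : ∀ n, E (n + 1) → E n),
      (∀ n, Function.Surjective (p n)) ∧
      (∀ (n : ℕ) (γ : Γ) (e : E (n + 1)), p n (ρ (n + 1) γ e) = ρ n γ (p n e)) ∧
      ∃ h : X ≃ₜ InvLimit p,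
        ∀ (γ : Γ) (x : X) (n : ℕ), (h (γ • x)).1 n = ρ n γ ((h x).1 n)

theorem ConjugateToOdometer.transfer_univ {Γ X : Type*} [Group Γ] [TopologicalSpace X]
    [MulAction Γ X] (hX : ConjugateToOdometer.{u} Γ X) :
    ConjugateToOdometer.{v} Γ X := by
  obtain ⟨E, _, ρ, p, hp, hρ, h, hh⟩ := hX
  let e n : E n ≃ ULift.{v} (Fin (Nat.card (E n))) := (Finite.equivFin _).trans Equiv.ulift.symm
  let p' n := e n ∘ p n ∘ (e (n + 1)).symm
  refine ⟨_, fun n => inferInstance, fun n => (e n).permCongrHom.toMonoidHom.comp (ρ n), p',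
    fun n => (e n).surjective.comp ((hp n).comp (e (n + 1)).symm.surjective), ?_,
    h.trans (InvLimit.congr (q := p') e fun n x => by simp [p']), ?_⟩
  · intro n γ x
    simp [p', Equiv.permCongrHom_coe, hρ]
  · intro γ x n
    simp [Equiv.permCongrHom_coe, hh]

theorem IsLocallyConstant.isClopen_setOfPred_apply_eq {X Y : Type*} [TopologicalSpace X]
    {f : X → Y} (hf : IsLocallyConstant f) : IsClopen {q : X × X | f q.1 = f q.2} := by
  have hpair := (hf.comp_continuous continuous_fst).prodMk (hf.comp_continuous continuous_snd)
  exact ⟨⟨hpair {r | r.1 = r.2}ᶜ⟩, hpair {r | r.1 = r.2}⟩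

theorem IsLocallyConstant.setOfPred_apply_eq_mem_uniformity {X Y : Type*} [UniformSpace X]
    [CompactSpace X] {f : X → Y} (hf : IsLocallyConstant f) :
    {q : X × X | f q.1 = f q.2} ∈ 𝓤 X := by
  rw [← nhdsSet_diagonal_eq_uniformity]
  exact hf.isClopen_setOfPred_apply_eq.isOpen.mem_nhdsSet.2 fun q hq => congrArg f hq

theorem uniformEquicontinuous_of_invariant_partitions {ι X : Type*} {E : ℕ → Type*}
    [UniformSpace X] [CompactSpace X] {F : ι → X → X} (f : ∀ n, X → E n)
    (hf : ∀ n, IsLocallyConstant (f n))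
    (hrefine : ∀ n x y, f (n + 1) x = f (n + 1) y → f n x = f n y)
    (hsep : ∀ x y, (∀ n, f n x = f n y) → x = y)
    (hF : ∀ i n x y, f n x = f n y → f n (F i x) = f n (F i y)) :
    UniformEquicontinuous F := by
  intro U hU
  let R n := {q : X × X | f n q.1 = f n q.2}
  have hR_anti : Antitone R := antitone_nat_of_succ_le fun n q hq => hrefine n _ _ hq
  obtain ⟨n, hn⟩ : ∃ n, R n ⊆ U := by
    refine exists_subset_nhds_of_isCompact' hR_anti.directed_ge
      (fun n => (hf n).isClopen_setOfPred_apply_eq.isClosed.isCompact)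
      (fun n => (hf n).isClopen_setOfPred_apply_eq.isClosed) fun q hq => ?_
    have hdiag : q ∈ diagonal X := hsep _ _ (mem_iInter.1 hq)
    rw [← nhdsSet_diagonal_eq_uniformity] at hU
    exact mem_nhdsSet_iff_forall.1 hU q hdiag
  filter_upwards [(hf n).setOfPred_apply_eq_mem_uniformity] with q hq i
  exact hn (hF i n _ _ hq)

theorem uniformEquicontinuous_of_semiconj_invLimit {ι X : Type*} {E : ℕ → Type*}
    [UniformSpace X] [CompactSpace X] {F : ι → X → X} {p : ∀ n, E (n + 1) → E n}
    (ρ : ∀ n, ι → E n → E n) (h : X ≃ₜ InvLimit p)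
    (hh : ∀ i x n, (h (F i x)).1 n = ρ n i ((h x).1 n)) :
    UniformEquicontinuous F := by
  refine uniformEquicontinuous_of_invariant_partitions (fun n x => (h x).1 n)
    (fun n => (InvLimit.isLocallyConstant_apply n).comp_continuous h.continuous)
    (fun n x y hxy => ?_) (fun x y hxy => h.injective <| Subtype.ext <| funext hxy)
    fun i n x y hxy => by simp only [hh, hxy]
  rw [← (h x).2, ← (h y).2, hxy]

def Setoid.quotientPerm {Γ X : Type*} [Group Γ] [MulAction Γ X] (s : Setoid X)
    (hs : ∀ (γ : Γ) x y, s x y → s (γ • x) (γ • y)) : Γ →* Equiv.Perm (Quotient s) where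
  toFun γ := Quotient.congr (MulAction.toPerm γ) fun x y =>
    ⟨hs γ x y, fun h => by simpa using hs γ⁻¹ _ _ h⟩
  map_one' := by ext ⟨x⟩; exact congrArg (Quot.mk _) (one_smul Γ x)
  map_mul' γ δ := by ext ⟨x⟩; exact congrArg (Quot.mk _) (mul_smul γ δ x)

theorem ConjugateToOdometer.of_antitone_discreteQuotient {Γ : Type*} {X : Type u} [Group Γ]
    [TopologicalSpace X] [CompactSpace X] [MulAction Γ X] (Q : ℕ → DiscreteQuotient X)
    (hQ : Antitone Q) (hsep : ∀ x y, (∀ n, (Q n).proj x = (Q n).proj y) → x = y)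
    (hinv : ∀ n (γ : Γ) x y, (Q n).toSetoid x y → (Q n).toSetoid (γ • x) (γ • y)) :
    ConjugateToOdometer.{u} Γ X := by
  let p (n : ℕ) := DiscreteQuotient.ofLE (hQ n.le_succ)
  have hproj n x : p n ((Q (n + 1)).proj x) = (Q n).proj x := DiscreteQuotient.ofLE_proj _ x
  let φ := InvLimit.lift (p := p) (fun n => (Q n).proj) hproj
  have hφ : Bijective φ :=
    ⟨fun x y hxy => hsep x y fun n => congrArg (·.1 n) hxy,
      InvLimit.surjective_lift hproj (fun n => (Q n).proj_isLocallyConstant)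
        fun n => (Q n).proj_surjective⟩
  refine ⟨fun n => (Q n : Type u), fun n => inferInstance,
    fun n => (Q n).toSetoid.quotientPerm (hinv n), p,
    fun n => Surjective.of_comp (g := (Q (n + 1)).proj) (by simpa [p] using (Q n).proj_surjective),
    ?_, (InvLimit.continuous_iff.2 fun n => (Q n).proj_isLocallyConstant).homeoOfEquivCompactToT2
      (f := Equiv.ofBijective φ hφ), fun γ x n => rfl⟩
  rintro n γ ⟨x⟩
  rfl

section OrbitChain

variable (Γ : Type*) {X : Type*} [Group Γ] [MulAction Γ X]

def orbitChainSetoid (U : SetRel X X) : Setoid X :=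
  Relation.EqvGen.setoid fun x y => ∀ γ : Γ, (γ • x, γ • y) ∈ U

variable {Γ}

theorem orbitChainSetoid_mono {U V : SetRel X X} (hUV : U ⊆ V) :
    orbitChainSetoid Γ U ≤ orbitChainSetoid Γ V :=
  Setoid.eqvGen_mono fun _ _ h γ => hUV (h γ)

theorem orbitChainSetoid_le {U : SetRel X X} {s : Setoid X} (hU : U ⊆ {q | s q.1 q.2}) :
    orbitChainSetoid Γ U ≤ s :=
  Setoid.eqvGen_le fun x y h => hU (by simpa using h 1)

theorem orbitChainSetoid_smul {U : SetRel X X} (γ : Γ) {x y : X}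
    (h : orbitChainSetoid Γ U x y) : orbitChainSetoid Γ U (γ • x) (γ • y) := by
  refine (Setoid.eqvGen_le (s := (orbitChainSetoid Γ U).comap (γ • ·)) (fun x y h => ?_)) h
  exact Relation.EqvGen.rel _ _ fun δ => by simpa only [smul_smul] using h (δ * γ)

theorem isOpen_setOfPred_orbitChainSetoid [UniformSpace X]
    (hΓ : UniformEquicontinuous fun γ : Γ => (γ • · : X → X)) {U : SetRel X X} (hU : U ∈ 𝓤 X)
    (x : X) : IsOpen {y | orbitChainSetoid Γ U x y} :=
  isOpen_iff_ball_subset.2 fun _ hy =>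
    ⟨_, hΓ U hU, fun _ hz => (orbitChainSetoid Γ U).trans hy (Relation.EqvGen.rel _ _ hz)⟩

def orbitChainQuotient [UniformSpace X]
    (hΓ : UniformEquicontinuous fun γ : Γ => (γ • · : X → X)) {U : SetRel X X}
    (hU : U ∈ 𝓤 X) : DiscreteQuotient X where
  toSetoid := orbitChainSetoid Γ U
  isOpen_setOfPred_rel := isOpen_setOfPred_orbitChainSetoid hΓ hU

end OrbitChain

theorem ConjugateToOdometer.of_uniformEquicontinuous {Γ : Type*} {X : Type u} [Group Γ]
    [UniformSpace X] [(𝓤 X).IsCountablyGenerated] [CompactSpace X] [T2Space X]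
    [TotallyDisconnectedSpace X] [MulAction Γ X]
    (hΓ : UniformEquicontinuous fun γ : Γ => (γ • · : X → X)) :
    ConjugateToOdometer.{u} Γ X := by
  obtain ⟨U, hU⟩ := (𝓤 X).exists_antitone_basis
  refine .of_antitone_discreteQuotient (fun n => orbitChainQuotient hΓ (hU.mem n))
    (fun m n hmn => orbitChainSetoid_mono (hU.antitone hmn)) (fun x y hxy => ?_)
    fun n γ x y => orbitChainSetoid_smul γ
  refine DiscreteQuotient.eq_of_forall_proj_eq fun R => ?_
  obtain ⟨n, hn⟩ := hU.mem_iff.1 R.proj_isLocallyConstant.setOfPred_apply_eq_mem_uniformity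
  exact Quotient.sound (orbitChainSetoid_le (s := R.toSetoid) (fun q hq => Quotient.exact (hn hq))
    (Quotient.exact (hxy n)))

theorem conjugate_to_odometer_iff_equicontinuous_general
    {Γ X : Type*} [Group Γ] [MetricSpace X] [CompactSpace X]
    [TotallyDisconnectedSpace X] [MulAction Γ X] :
    (∃ (E : ℕ → Type) (_ : ∀ n, Finite (E n)) (ρ : ∀ n, Γ →* Equiv.Perm (E n))
        (p : ∀ n, E (n + 1) → E n),
        (∀ n, Function.Surjective (p n)) ∧
        (∀ (n : ℕ) (γ : Γ) (e : E (n + 1)), p n (ρ (n + 1) γ e) = ρ n γ (p n e)) ∧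
        ∃ h : X ≃ₜ InvLimit p,
          ∀ (γ : Γ) (x : X) (n : ℕ), (h (γ • x)).1 n = ρ n γ ((h x).1 n)) ↔
      Equicontinuous fun γ : Γ => (γ • · : X → X) := by
  constructor
  · rintro ⟨E, -, ρ, p, -, -, h, hh⟩
    exact (uniformEquicontinuous_of_semiconj_invLimit (fun n γ => ρ n γ) h hh).equicontinuous
  · intro hΓ
    exact (ConjugateToOdometer.of_uniformEquicontinuous
      (CompactSpace.uniformEquicontinuous_of_equicontinuous hΓ)).transfer_univ

/-- An action of a group `Γ` by homeomorphisms on a compact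
metrizable totally disconnected space is conjugate (by an equivariant homeomorphism)
to the inverse limit of an inverse sequence of `Γ`-actions on finite sets with
surjective equivariant connecting maps if and only if it is equicontinuous. -/
theorem conjugate_to_odometer_iff_equicontinuous
    {Γ X : Type*} [Group Γ] [MetricSpace X] [CompactSpace X]
    [TotallyDisconnectedSpace X] [MulAction Γ X]
    (hcont : ∀ γ : Γ, Continuous fun x : X => γ • x) :
    (∃ (E : ℕ → Type) (_ : ∀ n, Finite (E n)) (ρ : ∀ n, Γ →* Equiv.Perm (E n))
        (p : ∀ n, E (n + 1) → E n),
        (∀ n, Function.Surjective (p n)) ∧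
        (∀ (n : ℕ) (γ : Γ) (e : E (n + 1)), p n (ρ (n + 1) γ e) = ρ n γ (p n e)) ∧
        ∃ h : X ≃ₜ InvLimit p,
          ∀ (γ : Γ) (x : X) (n : ℕ), (h (γ • x)).1 n = ρ n γ ((h x).1 n)) ↔
      Equicontinuous fun γ : Γ => (γ • · : X → X) :=
  conjugate_to_odometer_iff_equicontinuous_general
end

section
/- Every isometric Cantor system is residually finite. That is, if Γ acts on the Cantor set X by isometries of a compatible metric d, then for every finite subset F ⊆ Γ and every ε > 0 there exist a finite set E, an action of Γ on E, and a map ζ : E → X such that d(ζ(f·e), f·ζ(e)) < ε for all f ∈ F and e ∈ E, and ζ(E) is ε-dense in X. -/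
/-!
Fix `δ > 0` and call two points equivalent when they are joined by a chain of jumps of length
`< δ`. Isometries preserve this relation, and its classes are open, hence finitely many by
compactness; so `Γ` acts on the finite set of classes, and choosing a representative of each
class gives `ζ`. Both requirements hold as soon as every class has diameter `< ε`, and this is
where total disconnectedness enters: a locally constant map into a finite set whose fibres have
diameter `< ε` is uniformly locally constant, so for small `δ` it is constant on every class.
-/

open Metric

section ChainEquivalence

variable {X : Type*} [PseudoMetricSpace X]

def chainSetoid (δ : ℝ) : Setoid X := Relation.EqvGen.setoid fun x y => dist x y < δ

lemma chainSetoid_le_ker {α : Type*} {δ : ℝ} {f : X → α}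
    (hf : ∀ x y, dist x y < δ → f x = f y) : chainSetoid δ ≤ Setoid.ker f :=
  Setoid.eqvGen_le hf

lemma LipschitzWith.chainSetoid_le_comap {Y : Type*} [PseudoMetricSpace Y] {δ : ℝ} {f : X → Y}
    (hf : LipschitzWith 1 f) : chainSetoid δ ≤ (chainSetoid δ).comap f :=
  Setoid.eqvGen_le fun x y hxy =>
    Relation.EqvGen.rel _ _ <| lt_of_le_of_lt (by simpa using hf.dist_le_mul x y) hxy

def chainDiscreteQuotient {δ : ℝ} (hδ : 0 < δ) : DiscreteQuotient X where
  toSetoid := chainSetoid δ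
  isOpen_setOfPred_rel x := isOpen_iff.mpr fun _ hy =>
    ⟨δ, hδ, fun z hz => show chainSetoid δ x z from
      (chainSetoid δ).iseqv.trans hy (Relation.EqvGen.rel _ _ (mem_ball'.mp hz))⟩

lemma IsLocallyConstant.exists_pos_forall_dist_lt_imp_eq [CompactSpace X] {α : Type*}
    {f : X → α} (hf : IsLocallyConstant f) : ∃ δ > 0, ∀ x y, dist x y < δ → f x = f y := by
  obtain ⟨δ, hδ, hball⟩ := lebesgue_number_lemma_of_metric isCompact_univ hf.isOpen_fiber
    fun x _ => Set.mem_iUnion.mpr ⟨f x, rfl⟩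
  refine ⟨δ, hδ, fun x y hxy => ?_⟩
  obtain ⟨a, ha⟩ := hball x (Set.mem_univ x)
  exact (ha (mem_ball_self hδ)).trans (ha (mem_ball'.mpr hxy)).symm

end ChainEquivalence

lemma exists_pos_forall_chainSetoid_imp_dist_lt {X : Type*} [MetricSpace X] [CompactSpace X]
    [TotallyDisconnectedSpace X] {ε : ℝ} (hε : 0 < ε) :
    ∃ δ > 0, ∀ x y : X, chainSetoid δ x y → dist x y < ε := by
  obtain ⟨n, g, c, hg, hgc⟩ :=
    (ContinuousMap.id X).exists_finite_approximation_of_mem_nhds_diagonal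
      (S := {p : X × X | dist p.1 p.2 < ε / 2})
      (nhdsSet_diagonal_eq_uniformity (α := X) ▸ dist_mem_uniformity (half_pos hε))
  obtain ⟨δ, hδ, hgδ⟩ :=
    ((IsLocallyConstant.iff_continuous g).mpr hg).exists_pos_forall_dist_lt_imp_eq
  refine ⟨δ, hδ, fun x y hxy => ?_⟩
  have hgxy : g x = g y := chainSetoid_le_ker hgδ hxy
  calc dist x y ≤ dist x (c (g x)) + dist y (c (g y)) := hgxy ▸ dist_triangle_right _ _ _
    _ < ε / 2 + ε / 2 := add_lt_add (hgc x) (hgc y)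
    _ = ε := add_halves ε

section QuotientAction

variable {Γ X : Type*} [Monoid Γ] [MulAction Γ X] (s : Setoid X)

abbrev Setoid.quotientMulAction (hs : ∀ γ : Γ, s ≤ s.comap (γ • ·)) :
    MulAction Γ (Quotient s) where
  smul γ := Quotient.map (γ • ·) (hs γ)
  one_smul q := Quotient.inductionOn q fun x => congrArg _ (one_smul Γ x)
  mul_smul γ η q := Quotient.inductionOn q fun x => congrArg _ (mul_smul γ η x)

lemma Setoid.out_smul_rel_smul_out (hs : ∀ γ : Γ, s ≤ s.comap (γ • ·)) (γ : Γ) (q : Quotient s) :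
    letI := s.quotientMulAction hs
    s (γ • q).out (γ • q.out) := by
  let := s.quotientMulAction hs
  refine Quotient.exact ?_
  rw [Quotient.out_eq]
  conv_lhs => rw [← q.out_eq]
  rfl

end QuotientAction

theorem isometric_cantor_system_residually_finite_general
    {Γ X : Type*} [Group Γ] [MetricSpace X] [CompactSpace X]
    [TotallyDisconnectedSpace X]
    [MulAction Γ X] (hiso : ∀ γ : Γ, Isometry fun x : X => γ • x) :
    ∀ (F : Finset Γ) (ε : ℝ), 0 < ε →
      ∃ (E : Type) (_ : Finite E) (ρ : Γ →* Equiv.Perm E) (ζ : E → X),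
        (∀ f ∈ F, ∀ e : E, dist (ζ (ρ f e)) (f • ζ e) < ε) ∧
        (∀ x : X, ∃ e : E, dist x (ζ e) ≤ ε) := by
  intro F ε hε
  obtain ⟨δ, hδ, hsmall⟩ := exists_pos_forall_chainSetoid_imp_dist_lt (X := X) hε
  let Q := chainDiscreteQuotient (X := X) hδ
  have hinv : ∀ γ : Γ, Q.toSetoid ≤ Q.toSetoid.comap (γ • ·) :=
    fun γ => (hiso γ).lipschitz.chainSetoid_le_comap
  let := Q.toSetoid.quotientMulAction hinv
  obtain ⟨m, ⟨e⟩⟩ := Finite.exists_equiv_fin Q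
  refine ⟨Fin m, inferInstance, (Equiv.permCongrHom e).toMonoidHom.comp (MulAction.toPermHom Γ Q),
    fun i => (e.symm i).out, fun f _ i => ?_, fun x => ⟨e (Q.proj x), ?_⟩⟩
  · simpa using hsmall _ _ (Q.toSetoid.out_smul_rel_smul_out hinv f (e.symm i))
  · simp only [Equiv.symm_apply_apply]
    exact (hsmall _ _ (Q.toSetoid.iseqv.symm (Quotient.mk_out x))).le

/-- Every isometric Cantor system is residually finite: if a group Γ
acts by isometries on a Cantor set (a nonempty, compact, metrizable, totally
disconnected, perfect space) with a fixed compatible metric, then for every finite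
F ⊆ Γ and ε > 0 there is a finite set E with a Γ-action and a map ζ : E → X which is
ε-equivariant on F and has ε-dense image. -/
theorem isometric_cantor_system_residually_finite
    {Γ X : Type*} [Group Γ] [MetricSpace X] [CompactSpace X]
    [TotallyDisconnectedSpace X] [PerfectSpace X] [Nonempty X]
    [MulAction Γ X] (hiso : ∀ γ : Γ, Isometry fun x : X => γ • x) :
    ∀ (F : Finset Γ) (ε : ℝ), 0 < ε →
      ∃ (E : Type) (_ : Finite E) (ρ : Γ →* Equiv.Perm E) (ζ : E → X),
        (∀ f ∈ F, ∀ e : E, dist (ζ (ρ f e)) (f • ζ e) < ε) ∧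
        (∀ x : X, ∃ e : E, dist x (ζ e) ≤ ε) :=
  isometric_cantor_system_residually_finite_general hiso
end

section
/- Let (X, d) be a compact metric space and R > 0. Define two points of X to be R-connected if they lie in a subset of X that cannot be partitioned into two nonempty open sets at distance ≥ R from each other. Then each R-connected component (maximal R-connected subset) of X is a clopen subset of X, and being in the same R-connected component is an equivalence relation on X. -/
/-!
Two points are `R`-connected exactly when they can be joined by a finite chain of steps of
length `< R`. A chain class `C` is at distance `≥ R` from its complement, so for `R > 0` it is
clopen, and any `R`-connected set meeting `C` lies in `C`, since `C` and its complement split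
it. Conversely `C` is itself `R`-connected: in a splitting of `C` into two pieces at distance
`≥ R`, no step of a chain can cross from one piece to the other.
-/

/-- A subset `S` of a metric space is `R`-connected if it cannot be partitioned into
two nonempty (relatively open) pieces which are at distance at least `R` from each
other. -/
def IsRConnectedSet {X : Type*} [MetricSpace X] (R : ℝ) (S : Set X) : Prop :=
  ¬ ∃ A B : Set X, A.Nonempty ∧ B.Nonempty ∧ A ∪ B = S ∧
      IsOpen ((Subtype.val ⁻¹' A : Set S)) ∧ IsOpen ((Subtype.val ⁻¹' B : Set S)) ∧
      ∀ a ∈ A, ∀ b ∈ B, R ≤ dist a b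

/-- Two points are `R`-connected if they both belong to some `R`-connected subset. -/
def RConnRel {X : Type*} [MetricSpace X] (R : ℝ) (x y : X) : Prop :=
  ∃ S : Set X, IsRConnectedSet R S ∧ x ∈ S ∧ y ∈ S

open Metric Relation

def ChainRel {X : Type*} [PseudoMetricSpace X] (R : ℝ) : X → X → Prop :=
  ReflTransGen fun a b => dist a b < R

section PseudoMetric

variable {X : Type*} [PseudoMetricSpace X] {R : ℝ}

theorem chainRel_equivalence : Equivalence (ChainRel (X := X) R) := by
  have : Std.Symm fun a b : X => dist a b < R := ⟨fun a b h => by rwa [dist_comm]⟩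
  unfold ChainRel
  exact ⟨fun _ => .refl, fun h => Std.Symm.symm _ _ h, .trans⟩

theorem le_dist_of_chainRel_of_not_chainRel {x a b : X} (ha : ChainRel R x a)
    (hb : ¬ ChainRel R x b) : R ≤ dist a b :=
  not_lt.mp fun hab => hb (ha.tail hab)

theorem isClopen_of_forall_le_dist (hR : 0 < R) {C : Set X}
    (hC : ∀ a ∈ C, ∀ b ∉ C, R ≤ dist a b) : IsClopen C := by
  refine ⟨isOpen_compl_iff.mp ?_, ?_⟩ <;> refine isOpen_iff.mpr fun y hy => ⟨R, hR, ?_⟩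
  · exact fun z hz hzC => (hC z hzC y hy).not_gt (mem_ball.mp hz)
  · exact fun z hz => by_contra fun hzC => (hC y hy z hzC).not_gt (mem_ball'.mp hz)

theorem isClopen_setOf_chainRel (hR : 0 < R) (x : X) : IsClopen {y | ChainRel R x y} :=
  isClopen_of_forall_le_dist hR fun _ ha _ hb => le_dist_of_chainRel_of_not_chainRel ha hb

theorem ChainRel.mem_of_subset_union {x y : X} {A B : Set X}
    (hAB : {z | ChainRel R x z} ⊆ A ∪ B) (hsep : ∀ a ∈ A, ∀ b ∈ B, R ≤ dist a b)
    (hx : x ∈ A) (hy : ChainRel R x y) : y ∈ A := by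
  induction hy with
  | refl => exact hx
  | @tail b c hxb hbc hb =>
    exact (hAB (hxb.tail hbc)).resolve_right fun hc => (hsep b hb c hc).not_gt hbc

end PseudoMetric

section Metric

variable {X : Type*} [MetricSpace X] {R : ℝ}

theorem IsRConnectedSet.subset_of_forall_le_dist (hR : 0 < R) {S C : Set X}
    (hS : IsRConnectedSet R S) (hC : ∀ a ∈ C, ∀ b ∉ C, R ≤ dist a b) {x : X} (hxS : x ∈ S)
    (hxC : x ∈ C) : S ⊆ C := by
  intro b hbS
  by_contra hbC
  have hCclopen := isClopen_of_forall_le_dist hR hC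
  refine hS ⟨C ∩ S, Cᶜ ∩ S, ⟨x, hxC, hxS⟩, ⟨b, hbC, hbS⟩, ?_, ?_, ?_, ?_⟩
  · rw [← Set.union_inter_distrib_right, Set.union_compl_self, Set.univ_inter]
  · rw [Subtype.preimage_coe_inter_self]
    exact hCclopen.isOpen.preimage continuous_subtype_val
  · rw [Subtype.preimage_coe_inter_self]
    exact hCclopen.compl.isOpen.preimage continuous_subtype_val
  · exact fun a ha c hc => hC a ha.1 c hc.1

theorem isRConnectedSet_setOf_chainRel (hR : 0 < R) (x : X) :
    IsRConnectedSet R {y | ChainRel R x y} := by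
  rintro ⟨A, B, ⟨a, ha⟩, ⟨b, hb⟩, hAB, -, -, hsep⟩
  have hsep' : ∀ b ∈ B, ∀ a ∈ A, R ≤ dist b a := fun b hb a ha =>
    dist_comm a b ▸ hsep a ha b hb
  rcases hAB.ge (chainRel_equivalence.refl x) with hx | hx
  · have hbA := (hAB.le (.inr hb)).mem_of_subset_union hAB.ge hsep hx
    exact (hsep b hbA b hb).not_gt (dist_self b ▸ hR)
  · have haB := (hAB.le (.inl ha)).mem_of_subset_union (Set.union_comm A B ▸ hAB.ge) hsep' hx
    exact (hsep a ha a haB).not_gt (dist_self a ▸ hR)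

theorem IsRConnectedSet.subset_setOf_chainRel (hR : 0 < R) {S : Set X}
    (hS : IsRConnectedSet R S) {x : X} (hxS : x ∈ S) : S ⊆ {y | ChainRel R x y} :=
  hS.subset_of_forall_le_dist hR (fun _ ha _ hb => le_dist_of_chainRel_of_not_chainRel ha hb)
    hxS (chainRel_equivalence.refl x)

theorem rConnRel_eq_chainRel (hR : 0 < R) : RConnRel (X := X) R = ChainRel R := by
  ext x y
  constructor
  · exact fun ⟨S, hS, hxS, hyS⟩ => hS.subset_setOf_chainRel hR hxS hyS
  · exact fun hxy => ⟨_, isRConnectedSet_setOf_chainRel hR x, chainRel_equivalence.refl x, hxy⟩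

end Metric

theorem rConnected_equivalence_and_components_clopen_general
    {X : Type*} [MetricSpace X] (R : ℝ) (hR : 0 < R) :
    Equivalence (RConnRel R (X := X)) ∧
    ∀ x : X, IsClopen {y : X | RConnRel R x y} ∧
      IsRConnectedSet R {y : X | RConnRel R x y} ∧
      ∀ S : Set X, IsRConnectedSet R S → x ∈ S → S ⊆ {y : X | RConnRel R x y} := by
  rw [rConnRel_eq_chainRel hR]
  exact ⟨chainRel_equivalence, fun x => ⟨isClopen_setOf_chainRel hR x,
    isRConnectedSet_setOf_chainRel hR x, fun _ hS hxS => hS.subset_setOf_chainRel hR hxS⟩⟩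

/-- In a compact metric space, being `R`-connected is an equivalence
relation, and each `R`-connected component (the maximal `R`-connected subset containing
a given point, which coincides with the equivalence class) is clopen. -/
theorem rConnected_equivalence_and_components_clopen
    {X : Type*} [MetricSpace X] [CompactSpace X] (R : ℝ) (hR : 0 < R) :
    Equivalence (RConnRel R (X := X)) ∧
    ∀ x : X, IsClopen {y : X | RConnRel R x y} ∧
      IsRConnectedSet R {y : X | RConnRel R x y} ∧
      ∀ S : Set X, IsRConnectedSet R S → x ∈ S → S ⊆ {y : X | RConnRel R x y} :=
  rConnected_equivalence_and_components_clopen_general R hR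
end

section
/- Let L be a lattice (a discrete cocompact subgroup isomorphic to ℤ^n) in ℝ^n and let T^n = ℝ^n / L carry the flat metric induced by the Euclidean metric on ℝ^n. Then the isometry group of T^n is isomorphic (as a topological group) to a semidirect product F ⋉ T^n, where F is the finite group O_n(ℝ) ∩ Aut(L) of orthogonal linear maps preserving L, acting on T^n via the induced maps, and T^n acts on itself by translations. -/
/-- The group `F = Oₙ(ℝ) ∩ Aut(L)` of linear isometries of `ℝⁿ` preserving the
lattice `L`. -/
noncomputable def latticeAut {n : ℕ} (L : Submodule ℤ (EuclideanSpace ℝ (Fin n))) :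
    Subgroup (EuclideanSpace ℝ (Fin n) ≃ₗᵢ[ℝ] EuclideanSpace ℝ (Fin n)) where
  carrier := {f | ∀ x : EuclideanSpace ℝ (Fin n), x ∈ L ↔ f x ∈ L}
  one_mem' := fun _ => Iff.rfl
  mul_mem' := by
    intro a b ha hb x
    exact (hb x).trans (ha (b x))
  inv_mem' := by
    intro a ha x
    have h := (ha (a⁻¹ x)).symm
    simpa using h

theorem mem_latticeAut {n : ℕ} {L : Submodule ℤ (EuclideanSpace ℝ (Fin n))}
    {f : EuclideanSpace ℝ (Fin n) ≃ₗᵢ[ℝ] EuclideanSpace ℝ (Fin n)} :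
    f ∈ latticeAut L ↔ ∀ x : EuclideanSpace ℝ (Fin n), x ∈ L ↔ f x ∈ L :=
  Iff.rfl

/-- The isometry of the flat torus `ℝⁿ / L` induced by a lattice-preserving linear
map of `ℝⁿ`. -/
noncomputable def inducedTorusMap {n : ℕ} (L : Submodule ℤ (EuclideanSpace ℝ (Fin n)))
    (f : EuclideanSpace ℝ (Fin n) ≃ₗᵢ[ℝ] EuclideanSpace ℝ (Fin n))
    (hf : ∀ x : EuclideanSpace ℝ (Fin n), x ∈ L → f x ∈ L) :
    (EuclideanSpace ℝ (Fin n) ⧸ L) →ₗ[ℤ] (EuclideanSpace ℝ (Fin n) ⧸ L) :=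
  Submodule.mapQ L L (f.toLinearEquiv.toLinearMap.restrictScalars ℤ) fun x hx => hf x hx

/-- The group of members of `F = Oₙ(ℝ) ∩ Aut(L)` is given the discrete topology. -/
instance latticeAut.instTopologicalSpace {n : ℕ}
    (L : Submodule ℤ (EuclideanSpace ℝ (Fin n))) :
    TopologicalSpace ↥(latticeAut L) := ⊥

/-- The isometry group of the flat torus carries the topology of pointwise
convergence (which agrees with the uniform topology since the torus is compact and
the family is equicontinuous). -/
noncomputable instance torusIsomTop {n : ℕ} (L : Submodule ℤ (EuclideanSpace ℝ (Fin n))) :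
    TopologicalSpace ((EuclideanSpace ℝ (Fin n) ⧸ L) ≃ᵢ (EuclideanSpace ℝ (Fin n) ⧸ L)) :=
  TopologicalSpace.induced
    (fun g => (g : (EuclideanSpace ℝ (Fin n) ⧸ L) → (EuclideanSpace ℝ (Fin n) ⧸ L)))
    Pi.topologicalSpace

/-!
An isometry `g` of `T = E ⧸ L` fixing `0` lifts through the covering map `π : E → T` to a
continuous `h : E → E` with `h 0 = 0`. Since `π` is isometric on balls of radius `ρ / 2`, where
`ρ` is the length of a shortest nonzero lattice vector, `h` preserves distances locally. A map
preserving distances on a Euclidean ball is the restriction of a rigid motion, so the derivative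
of `h` is locally constant, hence constant, and `h` is a linear isometry `A` with
`π ∘ A = g ∘ π`; this forces `A L = L`. So every isometry of `T` is `π x ↦ π (A x) + t`.
Only finitely many linear isometries map `L` into itself: they are determined by the images of a
basis of `L`, which are lattice points of bounded norm. Finally `T` is compact and its isometry
group is Hausdorff, so the continuous bijection `(A, t) ↦ (π x ↦ π (A x) + t)` is a
homeomorphism.
-/

open Metric Set Filter Topology
open scoped RealInnerProductSpace

section Rigidity

variable {E : Type*} [NormedAddCommGroup E] [InnerProductSpace ℝ E] [FiniteDimensional ℝ E]

theorem exists_linearIsometryEquiv_eqOn_ball_of_inner_eq {k : E → E} {r : ℝ} (hr : 0 < r)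
    (hk : ∀ y ∈ ball (0 : E) r, ∀ y' ∈ ball (0 : E) r, ⟪k y, k y'⟫ = ⟪y, y'⟫) :
    ∃ A : E ≃ₗᵢ[ℝ] E, EqOn k A (ball 0 r) := by
  let b := stdOrthonormalBasis ℝ E
  have hs : (r / 2) ≠ 0 := by positivity
  have hv : ∀ i, (r / 2) • b i ∈ ball (0 : E) r := fun i => by
    rw [mem_ball_zero_iff, norm_smul, b.orthonormal.1 i, mul_one,
      Real.norm_of_nonneg (by positivity)]
    linarith
  let u i := (r / 2)⁻¹ • k ((r / 2) • b i)
  have hu : ∀ i, ∀ y ∈ ball (0 : E) r, ⟪u i, k y⟫ = ⟪b i, y⟫ := fun i y hy => by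
    rw [real_inner_smul_left, hk _ (hv i) y hy, real_inner_smul_left, inv_mul_cancel_left₀ hs]
  have hon : Orthonormal ℝ u := by
    rw [orthonormal_iff_ite]
    intro i j
    rw [real_inner_smul_right, hu i _ (hv j), real_inner_smul_right, inv_mul_cancel_left₀ hs,
      orthonormal_iff_ite.1 b.orthonormal]
  let b' := OrthonormalBasis.mk hon
    (hon.linearIndependent.span_eq_top_of_card_eq_finrank' (by simp)).ge
  refine ⟨b.repr.trans b'.repr.symm, fun y hy => b'.repr.injective ?_⟩
  ext i
  simp [b', b'.repr_apply_apply, b.repr_apply_apply, hu i y hy]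

theorem exists_linearIsometryEquiv_of_dist_eq_on_ball {k : E → E} {c : E} {r : ℝ}
    (hk : ∀ y ∈ ball c r, ∀ y' ∈ ball c r, dist (k y) (k y') = dist y y') :
    ∃ A : E ≃ₗᵢ[ℝ] E, ∀ y ∈ ball c r, k y = A (y - c) + k c := by
  rcases le_or_gt r 0 with hr | hr
  · exact ⟨.refl ℝ E, fun y hy => absurd hy (by simp [ball_eq_empty.2 hr])⟩
  let k' y := k (y + c) - k c
  have hball : ∀ y ∈ ball (0 : E) r, y + c ∈ ball c r := fun y hy => by
    simpa [mem_ball, dist_eq_norm] using hy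
  have hdist : ∀ y ∈ ball (0 : E) r, ∀ y' ∈ ball (0 : E) r, ‖k' y - k' y'‖ = ‖y - y'‖ :=
    fun y hy y' hy' => by
      simpa [k', dist_eq_norm] using hk _ (hball y hy) _ (hball y' hy')
  have hnorm : ∀ y ∈ ball (0 : E) r, ‖k' y‖ = ‖y‖ := fun y hy => by
    simpa [k'] using hdist y hy 0 (mem_ball_self hr)
  obtain ⟨A, hA⟩ := exists_linearIsometryEquiv_eqOn_ball_of_inner_eq hr (k := k')
    fun y hy y' hy' => by
      rw [real_inner_eq_norm_mul_self_add_norm_mul_self_sub_norm_sub_mul_self_div_two,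
        real_inner_eq_norm_mul_self_add_norm_mul_self_sub_norm_sub_mul_self_div_two y,
        hnorm y hy, hnorm y' hy', hdist y hy y' hy']
  refine ⟨A, fun y hy => ?_⟩
  have := hA (show y - c ∈ ball (0 : E) r by simpa [mem_ball, dist_eq_norm] using hy)
  simp only [k', sub_add_cancel] at this
  rw [← this, sub_add_cancel]

theorem exists_linearIsometryEquiv_of_locally_dist_eq {h : E → E}
    (hloc : ∀ x, ∃ δ > 0, ∀ y ∈ ball x δ, ∀ y' ∈ ball x δ, dist (h y) (h y') = dist y y') :
    ∃ A : E ≃ₗᵢ[ℝ] E, ∀ x, h x = A x + h 0 := by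
  have hderiv : ∀ x, ∃ A : E ≃ₗᵢ[ℝ] E, ∀ᶠ y in 𝓝 x, HasFDerivAt h (A : E →L[ℝ] E) y := by
    intro x
    obtain ⟨δ, hδ, hd⟩ := hloc x
    obtain ⟨A, hA⟩ := exists_linearIsometryEquiv_of_dist_eq_on_ball hd
    refine ⟨A, eventually_of_mem (isOpen_ball.mem_nhds (mem_ball_self hδ)) fun y hy => ?_⟩
    have haffine : HasFDerivAt (fun z => A (z - x) + h x) (A : E →L[ℝ] E) y := by
      simpa using ((A : E →L[ℝ] E).hasFDerivAt.sub_const (A x)).add_const (h x)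
    exact haffine.congr_of_eventuallyEq
      (eventually_of_mem (isOpen_ball.mem_nhds hy) fun z hz => hA z hz)
  choose A hA using hderiv
  have hfderiv : ∀ x, fderiv ℝ h x = A 0 := by
    have hlc : IsLocallyConstant (fderiv ℝ h) := (IsLocallyConstant.iff_eventually_eq _).2
      fun x => (hA x).mono fun y hy => hy.fderiv.trans (hA x).self_of_nhds.fderiv.symm
    exact fun x => (hlc.apply_eq_of_preconnectedSpace x 0).trans (hA 0).self_of_nhds.fderiv
  refine ⟨A 0, fun x => ?_⟩
  have hdiff : ∀ x, HasFDerivAt (h - ⇑(A 0)) 0 x := fun x => by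
    simpa [hfderiv x] using
      (hA x).self_of_nhds.differentiableAt.hasFDerivAt.sub (A 0 : E →L[ℝ] E).hasFDerivAt
  have := is_const_of_fderiv_eq_zero (fun x => (hdiff x).differentiableAt)
    (fun x => (hdiff x).fderiv) x 0
  simpa [sub_eq_iff_eq_add, add_comm] using this

end Rigidity

section Quotient

variable {E : Type*} [NormedAddCommGroup E] (L : Submodule ℤ E)

local notation "π" => (Submodule.Quotient.mk : E → E ⧸ L)

theorem exists_pos_forall_le_norm_of_discreteTopology [DiscreteTopology L] :
    ∃ ρ > 0, ∀ l ∈ L, l ≠ 0 → ρ ≤ ‖l‖ := by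
  obtain ⟨ρ, hρ, h⟩ := isOpen_singleton_iff.1 (isOpen_discrete ({0} : Set L))
  refine ⟨ρ, hρ, fun l hl hne => not_lt.1 fun hlt => hne ?_⟩
  simpa using congrArg Subtype.val (h ⟨l, hl⟩ (by simpa using hlt))

variable {L} {ρ : ℝ}

theorem norm_mk_eq_of_norm_lt (hρ : ∀ l ∈ L, l ≠ 0 → ρ ≤ ‖l‖) {x : E} (hx : ‖x‖ < ρ / 2) :
    ‖π x‖ = ‖x‖ := by
  refine le_antisymm (Submodule.Quotient.norm_mk_le L x)
    (QuotientAddGroup.le_norm_iff (S := L.toAddSubgroup).2 fun m hm => ?_)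
  have hmx : m - x ∈ L := (Submodule.Quotient.eq L).1 hm
  rcases eq_or_ne (m - x) 0 with h0 | h0
  · rw [sub_eq_zero.1 h0]
  · linarith [hρ _ hmx h0, norm_sub_le m x]

theorem dist_mk_eq_of_dist_lt (hρ : ∀ l ∈ L, l ≠ 0 → ρ ≤ ‖l‖) {x y : E}
    (hxy : dist x y < ρ / 2) : dist (π x) (π y) = dist x y := by
  rw [dist_eq_norm, dist_eq_norm, ← Submodule.Quotient.mk_sub]
  exact norm_mk_eq_of_norm_lt hρ (by rwa [← dist_eq_norm])

variable (L) in
theorem isCoveringMap_quotient_mk [DiscreteTopology L] : IsCoveringMap π :=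
  (L.toAddSubgroup.isAddQuotientCoveringMap_of_comm
    (isDiscrete_iff_discreteTopology.2 ‹_›)).isCoveringMap

variable [NormedSpace ℝ E] (L)

noncomputable def quotientIsometryEquiv (f : E ≃ₗᵢ[ℝ] E) (hf : ∀ x, x ∈ L ↔ f x ∈ L) :
    E ⧸ L ≃ᵢ E ⧸ L :=
  have himage : f '' L = L := by
    ext y
    exact ⟨by rintro ⟨z, hz, rfl⟩; exact (hf z).1 hz,
      fun hy => ⟨f.symm y, (hf _).2 (by simpa using hy), by simp⟩⟩
  let e := Submodule.Quotient.equiv L L (f.toLinearEquiv.restrictScalars ℤ)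
    (SetLike.coe_injective (by simpa using himage))
  { e.toEquiv with
    isometry_toFun := AddMonoidHomClass.isometry_of_norm e fun q => by
      obtain ⟨z, rfl⟩ := Submodule.Quotient.mk_surjective L q
      show ‖π (f z)‖ = ‖π z‖
      have hnorm (x : E) : ‖π x‖ = infDist x L :=
        QuotientAddGroup.norm_mk (S := L.toAddSubgroup) x
      rw [hnorm, hnorm, ← himage, infDist_image f.isometry, himage] }

variable {L} in
theorem LinearIsometryEquiv.eq_of_quotient_mk_comp_eq [DiscreteTopology L] {A B : E ≃ₗᵢ[ℝ] E}
    (h : ∀ x, π (A x) = π (B x)) : A = B :=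
  LinearIsometryEquiv.ext <| congrFun <| (isCoveringMap_quotient_mk L).eq_of_comp_eq
    A.continuous B.continuous (funext h) 0 (by simp)

end Quotient

section Lattice

variable {E : Type*} [NormedAddCommGroup E] [InnerProductSpace ℝ E] [FiniteDimensional ℝ E]
  {L : Submodule ℤ E} [DiscreteTopology L]

local notation "π" => (Submodule.Quotient.mk : E → E ⧸ L)

theorem exists_linearIsometryEquiv_lift (g : E ⧸ L ≃ᵢ E ⧸ L) (hg : g 0 = 0) :
    ∃ A : E ≃ₗᵢ[ℝ] E, ∀ x, g (π x) = π (A x) := by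
  obtain ⟨ρ, hρ0, hρ⟩ := exists_pos_forall_le_norm_of_discreteTopology L
  obtain ⟨h, ⟨h0, hh⟩, -⟩ := (isCoveringMap_quotient_mk L).existsUnique_continuousMap_lifts
    ⟨g ∘ π, g.continuous.comp continuous_quot_mk⟩ 0 0 (by simp [hg])
  have hgh : ∀ x, g (π x) = π (h x) := fun x => (congrFun hh x).symm
  obtain ⟨A, hA⟩ := exists_linearIsometryEquiv_of_locally_dist_eq (h := h) fun x => by
    obtain ⟨δ, hδ, hδh⟩ := Metric.continuous_iff.1 h.continuous x (ρ / 4) (by positivity)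
    refine ⟨min δ (ρ / 4), by positivity, fun y hy y' hy' => ?_⟩
    rw [mem_ball, lt_min_iff] at hy hy'
    have hyy' : dist y y' < ρ / 2 := by linarith [dist_triangle_right y y' x]
    have hhyy' : dist (h y) (h y') < ρ / 2 := by
      linarith [dist_triangle_right (h y) (h y') (h x), hδh y hy.1, hδh y' hy'.1]
    rw [← dist_mk_eq_of_dist_lt hρ hhyy', ← hgh, ← hgh, g.dist_eq,
      dist_mk_eq_of_dist_lt hρ hyy']
  exact ⟨A, fun x => by rw [hgh, hA, h0, add_zero]⟩

variable (L) [IsZLattice ℝ L]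

theorem finite_setOf_linearIsometryEquiv_mapsTo :
    {f : E ≃ₗᵢ[ℝ] E | ∀ x ∈ L, f x ∈ L}.Finite := by
  let b := (Module.Free.chooseBasis ℤ L).ofZLatticeBasis ℝ L
  have hbL : ∀ i, b i ∈ L := by simp [b]
  have hfin : (univ.pi fun i => closedBall (0 : E) ‖b i‖ ∩ L).Finite :=
    Finite.pi fun i => finite_isBounded_inter_isClosed
      (isDiscrete_iff_discreteTopology.2 ‹_›) isBounded_closedBall
      (AddSubgroup.isClosed_of_discrete (H := L.toAddSubgroup))
  refine Set.Finite.of_finite_image (f := fun (f : E ≃ₗᵢ[ℝ] E) i => f (b i))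
    (hfin.subset ?_) fun f _ f' _ h => ?_
  · rintro _ ⟨f, hf, rfl⟩ i -
    exact ⟨by simp, hf _ (hbL i)⟩
  · exact LinearIsometryEquiv.toLinearEquiv_injective (b.ext' (congrFun h))

theorem compactSpace_quotient : CompactSpace (E ⧸ L) := by
  have := IsZLattice.isCompact_range_of_periodic L π continuous_quot_mk
    fun z w hw => by simpa using hw
  exact ⟨by rwa [(Submodule.Quotient.mk_surjective L).range_eq] at this⟩

end Lattice

section FlatTorus

variable {n : ℕ} {L : Submodule ℤ (EuclideanSpace ℝ (Fin n))}

local notation "V" => EuclideanSpace ℝ (Fin n)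
local notation "T" => EuclideanSpace ℝ (Fin n) ⧸ L
local notation "π" => (Submodule.Quotient.mk : V → T)

instance : DiscreteTopology ↥(latticeAut L) := ⟨rfl⟩

instance [DiscreteTopology L] : T2Space (T ≃ᵢ T) :=
  have : IsClosed (L : Set V) := AddSubgroup.isClosed_of_discrete (H := L.toAddSubgroup)
  Topology.IsEmbedding.t2Space ⟨⟨rfl⟩, DFunLike.coe_injective⟩

variable (L) in
noncomputable def latticeAutProdToIsometry (p : latticeAut L × T) : T ≃ᵢ T :=
  (quotientIsometryEquiv L p.1.1 (mem_latticeAut.1 p.1.2)).trans (IsometryEquiv.addRight p.2)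

@[simp]
theorem latticeAutProdToIsometry_mk (f : latticeAut L) (t : T) (x : V) :
    latticeAutProdToIsometry L (f, t) (π x) = π (f.1 x) + t :=
  rfl

@[simp]
theorem latticeAutProdToIsometry_zero (f : latticeAut L) (t : T) :
    latticeAutProdToIsometry L (f, t) 0 = t := by
  simpa using latticeAutProdToIsometry_mk f t 0

@[simp]
theorem inducedTorusMap_mk (f : V ≃ₗᵢ[ℝ] V) (hf : ∀ x, x ∈ L → f x ∈ L) (x : V) :
    inducedTorusMap L f hf (π x) = π (f x) :=
  rfl

theorem latticeAutProdToIsometry_mul (f₁ f₂ : latticeAut L) (t₁ t₂ : T) :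
    latticeAutProdToIsometry L (f₁, t₁) * latticeAutProdToIsometry L (f₂, t₂) =
      latticeAutProdToIsometry L (f₁ * f₂,
        t₁ + inducedTorusMap L f₁.1 (fun x hx => (mem_latticeAut.1 f₁.2 x).1 hx) t₂) := by
  ext q
  obtain ⟨x, rfl⟩ := Submodule.Quotient.mk_surjective L q
  obtain ⟨z, rfl⟩ := Submodule.Quotient.mk_surjective L t₂
  rw [IsometryEquiv.mul_apply, latticeAutProdToIsometry_mk, ← Submodule.Quotient.mk_add,
    latticeAutProdToIsometry_mk, latticeAutProdToIsometry_mk, inducedTorusMap_mk, map_add,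
    Submodule.Quotient.mk_add]
  change _ = π (f₁.1 (f₂.1 x)) + _
  abel

theorem latticeAutProdToIsometry_injective [DiscreteTopology L] :
    Function.Injective (latticeAutProdToIsometry L) := by
  rintro ⟨f, t⟩ ⟨f', t'⟩ h
  obtain rfl : t = t' := by
    simpa using DFunLike.congr_fun h 0
  have hf : ∀ x, π (f.1 x) = π (f'.1 x) := fun x => by
    simpa using DFunLike.congr_fun h (π x)
  exact Prod.ext (Subtype.ext (LinearIsometryEquiv.eq_of_quotient_mk_comp_eq hf)) rfl

theorem latticeAutProdToIsometry_surjective [DiscreteTopology L] :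
    Function.Surjective (latticeAutProdToIsometry L) := by
  intro g
  let g₀ := g.trans (IsometryEquiv.addRight (-g 0))
  have hg₀ : g₀ 0 = 0 := by simp [g₀]
  obtain ⟨A, hA⟩ := exists_linearIsometryEquiv_lift g₀ hg₀
  have hAL : A ∈ latticeAut L := fun x => by
    rw [← Submodule.Quotient.mk_eq_zero L, ← Submodule.Quotient.mk_eq_zero L (x := A x), ← hA,
      ← g₀.injective.eq_iff, hg₀]
  refine ⟨(⟨A, hAL⟩, g 0), IsometryEquiv.ext fun q => ?_⟩
  obtain ⟨x, rfl⟩ := Submodule.Quotient.mk_surjective L q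
  simp [← hA, g₀]

theorem continuous_latticeAutProdToIsometry : Continuous (latticeAutProdToIsometry L) := by
  refine continuous_induced_rng.2 (continuous_pi fun q => ?_)
  obtain ⟨x, rfl⟩ := Submodule.Quotient.mk_surjective L q
  exact ((continuous_of_discreteTopology (f := fun f : latticeAut L => π (f.1 x))).comp
    continuous_fst).add continuous_snd

end FlatTorus

/-- The isometry group of a flat torus `T = ℝⁿ / L` is isomorphic,
as a topological group, to the semidirect product `F ⋉ T`, where
`F = Oₙ(ℝ) ∩ Aut(L)` is the finite group of orthogonal maps preserving `L`, acting on
`T` via the induced maps, and `T` acts by translations.  The isomorphism is given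
explicitly: `Φ (f, t)` is the isometry `[x] ↦ [f x] + t`, `Φ` intertwines composition
of isometries with the semidirect product multiplication
`(f₁, t₁)·(f₂, t₂) = (f₁ f₂, t₁ + f₁·t₂)`, and `Φ` is a homeomorphism (where `F`
carries the discrete topology and `T` its quotient topology). -/
theorem isometry_group_of_flat_torus_eq_semidirect_product
    {n : ℕ} (L : Submodule ℤ (EuclideanSpace ℝ (Fin n)))
    [DiscreteTopology L] [IsZLattice ℝ L] :
    Finite ↥(latticeAut L) ∧
    ∃ Φ : ↥(latticeAut L) × (EuclideanSpace ℝ (Fin n) ⧸ L) ≃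
        ((EuclideanSpace ℝ (Fin n) ⧸ L) ≃ᵢ (EuclideanSpace ℝ (Fin n) ⧸ L)),
      (∀ (f : ↥(latticeAut L)) (t : EuclideanSpace ℝ (Fin n) ⧸ L)
          (x : EuclideanSpace ℝ (Fin n)),
          Φ (f, t) (Submodule.Quotient.mk x) = Submodule.Quotient.mk (f.1 x) + t) ∧
      (∀ (f₁ f₂ : ↥(latticeAut L)) (t₁ t₂ : EuclideanSpace ℝ (Fin n) ⧸ L),
          Φ (f₁, t₁) * Φ (f₂, t₂) =
            Φ (f₁ * f₂,
              t₁ + inducedTorusMap L f₁.1 (fun x hx => (mem_latticeAut.1 f₁.2 x).1 hx) t₂)) ∧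
      Continuous Φ ∧ Continuous Φ.symm := by
  have hfinite : Finite ↥(latticeAut L) :=
    ((finite_setOf_linearIsometryEquiv_mapsTo L).subset
      fun f hf x hx => (mem_latticeAut.1 hf x).1 hx).to_subtype
  have := compactSpace_quotient L
  let Φ := Equiv.ofBijective _
    ⟨latticeAutProdToIsometry_injective (L := L), latticeAutProdToIsometry_surjective⟩
  have hΦ : Continuous Φ := continuous_latticeAutProdToIsometry
  exact ⟨hfinite, Φ, latticeAutProdToIsometry_mk, latticeAutProdToIsometry_mul, hΦ,
    hΦ.continuous_symm_of_equiv_compact_to_t2⟩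
end

section
/- Let G be a compact Lie group and let Γ ≤ G be a finitely generated, virtually abelian subgroup. Then the translation action of Γ on G (γ · g = γg) is residually finite: for every finite F ⊆ Γ and every ε > 0 (with respect to a compatible metric d on G) there exist a finite set E, an action of Γ on E, and a map ζ : E → G such that d(ζ(f·e), f·ζ(e)) < ε for all f ∈ F, e ∈ E, and ζ(E) is ε-dense in G. -/
/-!
Replace `dist` by the bi-invariant pseudometric
`biInvDist x y = ⨆ a b, dist (a * x * b) (a * y * b)`, which dominates `dist` and, `G` being
compact, is small where `dist` is. Left invariance lets a finite model for a finite-index subgroup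
`A ≤ Γ` induce one for `Γ` on `(Γ ⧸ A) × E`, as for induced representations; so by the structure
theorem `Γ` may be replaced by `ℤ^k × T` with `T` finite. By compactness, some `n` larger than all
coordinates of elements of `F` makes every `b i ^ n` close to `1`, where the `b i` are the images
of the generators of `ℤ^k`. Then `ℤ^k × T` acts on `(ℤ/n)^k × T` times a finite net of `G`;
lifting residues to `[0, n)`, the defect of equivariance is a product of powers `b i ^ (± n)`,
which is small by bi-invariance.
-/

open Filter Topology

theorem frequently_pow_mem_of_mem_nhds_one {G : Type*} [Group G] [TopologicalSpace G]
    [IsTopologicalGroup G] [CompactSpace G] (g : G) {U : Set G} (hU : U ∈ 𝓝 1) :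
    ∃ᶠ n in atTop, g ^ n ∈ U := by
  obtain ⟨V, hV, hVU⟩ := exists_nhds_split_inv hU
  obtain ⟨x, hx⟩ := exists_clusterPt_of_compactSpace (map (g ^ ·) atTop)
  have hW : (· / x) ⁻¹' V ∈ 𝓝 x :=
    (continuous_div_right' x).continuousAt.preimage_mem_nhds (by simpa using hV)
  have hfreq := frequently_atTop.mp (MapClusterPt.frequently hx hW)
  refine frequently_atTop.mpr fun M => ?_
  obtain ⟨p, -, hp⟩ := hfreq 0
  obtain ⟨q, hpq, hq⟩ := hfreq (p + M)
  refine ⟨q - p, by omega, ?_⟩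
  have : g ^ (q - p) = g ^ q / x / (g ^ p / x) := by
    rw [div_div_div_cancel_right, div_eq_mul_inv, ← pow_sub _ (by omega : p ≤ q)]
  exact this ▸ hVU _ hq _ hp

section BiInvariant

variable {G : Type*} [Group G] [PseudoMetricSpace G]

noncomputable def biInvDist (x y : G) : ℝ := ⨆ p : G × G, dist (p.1 * x * p.2) (p.1 * y * p.2)

lemma biInvDist_le {x y : G} {C : ℝ} (h : ∀ a b : G, dist (a * x * b) (a * y * b) ≤ C) :
    biInvDist x y ≤ C :=
  ciSup_le fun p => h p.1 p.2

lemma biInvDist_comm (x y : G) : biInvDist x y = biInvDist y x :=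
  iSup_congr fun _ => dist_comm _ _

section Bounded

variable [BoundedSpace G]

lemma bddAbove_range_dist_mul_mul (x y : G) :
    BddAbove (Set.range fun p : G × G => dist (p.1 * x * p.2) (p.1 * y * p.2)) := by
  obtain ⟨C, hC⟩ := Metric.isBounded_iff.mp (Bornology.isBounded_univ.mpr ‹BoundedSpace G›)
  exact ⟨C, by rintro r ⟨p, rfl⟩; exact hC (Set.mem_univ _) (Set.mem_univ _)⟩

lemma dist_mul_mul_le_biInvDist (x y a b : G) : dist (a * x * b) (a * y * b) ≤ biInvDist x y :=
  le_ciSup (bddAbove_range_dist_mul_mul x y) (a, b)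

lemma dist_le_biInvDist (x y : G) : dist x y ≤ biInvDist x y := by
  simpa using dist_mul_mul_le_biInvDist x y 1 1

lemma biInvDist_self (x : G) : biInvDist x x = 0 :=
  le_antisymm (biInvDist_le fun _ _ => (dist_self _).le) (dist_nonneg.trans (dist_le_biInvDist x x))

lemma biInvDist_triangle (x y z : G) : biInvDist x z ≤ biInvDist x y + biInvDist y z :=
  biInvDist_le fun a b => (dist_triangle _ (a * y * b) _).trans
    (add_le_add (dist_mul_mul_le_biInvDist x y a b) (dist_mul_mul_le_biInvDist y z a b))

lemma biInvDist_mul_mul (a b x y : G) : biInvDist (a * x * b) (a * y * b) = biInvDist x y := by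
  have key : ∀ a b x y : G, biInvDist (a * x * b) (a * y * b) ≤ biInvDist x y := fun a b x y =>
    biInvDist_le fun c d => by
      simpa only [mul_assoc] using dist_mul_mul_le_biInvDist x y (c * a) (b * d)
  refine le_antisymm (key a b x y) ?_
  simpa only [mul_assoc, inv_mul_cancel_left, mul_inv_cancel, mul_one] using
    key a⁻¹ b⁻¹ (a * x * b) (a * y * b)

lemma biInvDist_mul_left (g x y : G) : biInvDist (g * x) (g * y) = biInvDist x y := by
  simpa using biInvDist_mul_mul g 1 x y

lemma biInvDist_mul_right (x y g : G) : biInvDist (x * g) (y * g) = biInvDist x y := by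
  simpa using biInvDist_mul_mul 1 g x y

lemma biInvDist_mul_self_right (x y : G) : biInvDist (x * y) y = biInvDist x 1 := by
  simpa using biInvDist_mul_right x 1 y

lemma biInvDist_mul_one_le (x y : G) : biInvDist (x * y) 1 ≤ biInvDist x 1 + biInvDist y 1 := by
  simpa only [biInvDist_mul_self_right] using biInvDist_triangle (x * y) y 1

lemma biInvDist_inv_one (x : G) : biInvDist x⁻¹ 1 = biInvDist x 1 := by
  simpa [biInvDist_comm x⁻¹] using (biInvDist_mul_right 1 x⁻¹ x).symm

lemma biInvDist_pow_one_le (x : G) (n : ℕ) : biInvDist (x ^ n) 1 ≤ n * biInvDist x 1 := by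
  induction n with
  | zero => simp [biInvDist_self]
  | succ n ih =>
    calc biInvDist (x ^ (n + 1)) 1 ≤ biInvDist (x ^ n) 1 + biInvDist x 1 := by
          rw [pow_succ]; exact biInvDist_mul_one_le _ _
      _ ≤ (n + 1 : ℕ) * biInvDist x 1 := by push_cast; linarith

lemma biInvDist_zpow_one_le (x : G) (n : ℤ) : biInvDist (x ^ n) 1 ≤ |n| * biInvDist x 1 := by
  rcases n.eq_nat_or_neg with ⟨m, rfl | rfl⟩
  · simpa using biInvDist_pow_one_le x m
  · simpa [biInvDist_inv_one] using biInvDist_pow_one_le x m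

end Bounded

variable [IsTopologicalGroup G] [CompactSpace G]

lemma setOf_biInvDist_le_mem_nhds (x : G) {θ : ℝ} (hθ : 0 < θ) :
    {y | biInvDist y x ≤ θ} ∈ 𝓝 x := by
  have huc : UniformContinuous fun p : (G × G) × G × G =>
      dist (p.1.1 * p.2.1 * p.1.2) (p.1.1 * p.2.2 * p.1.2) :=
    CompactSpace.uniformContinuous_of_continuous (by fun_prop)
  obtain ⟨η, hη, hclose⟩ := Metric.uniformContinuous_iff.mp huc θ hθ
  refine Filter.mem_of_superset (Metric.ball_mem_nhds x hη) fun y hy => biInvDist_le fun a b => ?_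
  have hdist : dist (((a, b), (y, x)) : (G × G) × G × G) ((a, b), (x, x)) < η := by
    simpa [Prod.dist_eq, hη] using hy
  simpa [Real.dist_eq, abs_of_nonneg dist_nonneg] using (hclose hdist).le

lemma exists_lt_forall_biInvDist_pow_le {ι : Type*} [Finite ι] (b : ι → G) (M : ℕ) {θ : ℝ}
    (hθ : 0 < θ) : ∃ n, M < n ∧ ∀ i, biInvDist (b i ^ n) 1 ≤ θ := by
  have hU : Set.univ.pi (fun _ => {y | biInvDist y 1 ≤ θ}) ∈ 𝓝 (1 : ι → G) :=
    set_pi_mem_nhds Set.finite_univ fun _ _ => setOf_biInvDist_le_mem_nhds 1 hθ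
  obtain ⟨n, hn, hb⟩ := frequently_atTop.mp (frequently_pow_mem_of_mem_nhds_one b hU) (M + 1)
  exact ⟨n, hn, fun i => hb i (Set.mem_univ i)⟩

lemma exists_finset_forall_exists_biInvDist_le {δ : ℝ} (hδ : 0 < δ) :
    ∃ t : Finset G, ∀ g, ∃ x ∈ t, biInvDist g x ≤ δ := by
  obtain ⟨t, ht⟩ := finite_cover_nhds fun x => setOf_biInvDist_le_mem_nhds (G := G) x hδ
  refine ⟨t, fun g => ?_⟩
  simpa using ht.symm.subset (Set.mem_univ g)

end BiInvariant

section Models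

variable {Γ G : Type*} [Group Γ] [Group G]

def IsApproxModel (d : G → G → ℝ) (ι : Γ →* G) (F : Finset Γ) (δ : ℝ) {E : Type*}
    (ρ : Γ →* Equiv.Perm E) (ζ : E → G) : Prop :=
  (∀ f ∈ F, ∀ e, d (ζ (ρ f e)) (ι f * ζ e) ≤ δ) ∧ ∀ g, ∃ e, d g (ζ e) ≤ δ

def IsResiduallyFiniteTranslation (d : G → G → ℝ) (ι : Γ →* G) : Prop :=
  ∀ (F : Finset Γ) (δ : ℝ), 0 < δ → ∃ (E : Type) (_ : Finite E) (ρ : Γ →* Equiv.Perm E)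
    (ζ : E → G), IsApproxModel d ι F δ ρ ζ

variable {d : G → G → ℝ} {ι : Γ →* G} {F : Finset Γ} {δ : ℝ}

lemma IsApproxModel.exists_type {E : Type*} [Finite E] {ρ : Γ →* Equiv.Perm E} {ζ : E → G}
    (h : IsApproxModel d ι F δ ρ ζ) :
    ∃ (E' : Type) (_ : Finite E') (ρ' : Γ →* Equiv.Perm E') (ζ' : E' → G),
      IsApproxModel d ι F δ ρ' ζ' := by
  obtain ⟨N, ⟨e⟩⟩ := Finite.exists_equiv_fin E
  refine ⟨Fin N, inferInstance, e.permCongrHom.toMonoidHom.comp ρ, ζ ∘ e.symm,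
    fun f hf x => by simpa using h.1 f hf (e.symm x), fun g => ?_⟩
  obtain ⟨x, hx⟩ := h.2 g
  exact ⟨e x, by simpa using hx⟩

lemma IsResiduallyFiniteTranslation.of_comp_mulEquiv {Δ : Type*} [Group Δ] (φ : Γ ≃* Δ)
    (h : IsResiduallyFiniteTranslation d (ι.comp φ.symm.toMonoidHom)) :
    IsResiduallyFiniteTranslation d ι := by
  classical
  intro F δ hδ
  obtain ⟨E, _, ρ, ζ, hequiv, hdense⟩ := h (F.map φ.toEquiv.toEmbedding) δ hδ
  refine ⟨E, inferInstance, ρ.comp φ.toMonoidHom, ζ, fun f hf e => ?_, hdense⟩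
  simpa using hequiv (φ f) (Finset.mem_map_of_mem _ hf) e

end Models

namespace Subgroup

variable {Γ : Type*} [Group Γ] (A : Subgroup Γ)

noncomputable def cosetCocycle (γ : Γ) (q : Γ ⧸ A) : A :=
  ⟨(γ • q).out⁻¹ * (γ * q.out), QuotientGroup.eq.mp <| by
    rw [QuotientGroup.out_eq']
    exact congrArg (fun r : Γ ⧸ A => γ • r) (QuotientGroup.out_eq' q).symm⟩

lemma out_mul_cosetCocycle (γ : Γ) (q : Γ ⧸ A) :
    (γ • q).out * (A.cosetCocycle γ q : Γ) = γ * q.out :=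
  mul_inv_cancel_left _ _

lemma cosetCocycle_one (q : Γ ⧸ A) : A.cosetCocycle 1 q = 1 := by
  ext; simp [cosetCocycle]

lemma cosetCocycle_mul (γ γ' : Γ) (q : Γ ⧸ A) :
    A.cosetCocycle (γ * γ') q = A.cosetCocycle γ (γ' • q) * A.cosetCocycle γ' q := by
  ext; simp only [cosetCocycle, mul_smul, coe_mul]; group

noncomputable def inducedPermHom {E : Type*} (ρ : A →* Equiv.Perm E) :
    Γ →* Equiv.Perm ((Γ ⧸ A) × E) :=
  letI : MulAction Γ ((Γ ⧸ A) × E) :=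
    { smul γ p := (γ • p.1, ρ (A.cosetCocycle γ p.1) p.2)
      one_smul p := by
        change (_, _) = p
        rw [cosetCocycle_one, map_one, one_smul]; rfl
      mul_smul γ γ' p := by
        change (_, _) = (_, _)
        rw [cosetCocycle_mul, map_mul, mul_smul]; rfl }
  MulAction.toPermHom Γ _

lemma inducedPermHom_apply {E : Type*} (ρ : A →* Equiv.Perm E) (γ : Γ) (q : Γ ⧸ A) (x : E) :
    A.inducedPermHom ρ γ (q, x) = (γ • q, ρ (A.cosetCocycle γ q) x) :=
  rfl

end Subgroup

lemma IsResiduallyFiniteTranslation.of_finiteIndex {Γ G : Type*} [Group Γ] [Group G]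
    {d : G → G → ℝ} (hd : ∀ g x y, d (g * x) (g * y) = d x y) {ι : Γ →* G}
    (A : Subgroup Γ) [A.FiniteIndex] (hA : IsResiduallyFiniteTranslation d (ι.comp A.subtype)) :
    IsResiduallyFiniteTranslation d ι := by
  classical
  intro F δ hδ
  have : Fintype (Γ ⧸ A) := Fintype.ofFinite _
  obtain ⟨E, _, ρ, ζ, hequiv, hdense⟩ :=
    hA ((F ×ˢ Finset.univ).image fun p => A.cosetCocycle p.1 p.2) δ hδ
  refine IsApproxModel.exists_type (E := (Γ ⧸ A) × E) (ρ := A.inducedPermHom ρ)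
    (ζ := fun p => ι p.1.out * ζ p.2) ⟨fun f hf ⟨q, x⟩ => ?_, fun g => ?_⟩
  · have hmem : A.cosetCocycle f q ∈ (F ×ˢ Finset.univ).image fun p => A.cosetCocycle p.1 p.2 :=
      Finset.mem_image.mpr ⟨(f, q), Finset.mem_product.mpr ⟨hf, Finset.mem_univ q⟩, rfl⟩
    have htrans : ι f * (ι q.out * ζ x) = ι (f • q).out * (ι (A.cosetCocycle f q) * ζ x) := by
      rw [← mul_assoc, ← mul_assoc, ← map_mul, ← map_mul, A.out_mul_cosetCocycle]
    rw [A.inducedPermHom_apply, htrans, hd]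
    exact hequiv _ hmem x
  · let q : Γ ⧸ A := QuotientGroup.mk 1
    obtain ⟨x, hx⟩ := hdense ((ι q.out)⁻¹ * g)
    refine ⟨(q, x), ?_⟩
    rwa [← hd (ι q.out), mul_inv_cancel_left] at hx

lemma exists_val_intCast_add_eq {n : ℕ} [NeZero n] {a : ℤ} (ha : |a| < n) (c : ZMod n) :
    ∃ u : ℤ, |u| ≤ 1 ∧ (((a : ZMod n) + c).val : ℤ) = n * u + a + c.val := by
  have hdvd : (n : ℤ) ∣ ((a : ZMod n) + c).val - a - c.val :=
    (ZMod.intCast_zmod_eq_zero_iff_dvd _ n).mp (by simp)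
  obtain ⟨u, hu⟩ := hdvd
  refine ⟨u, ?_, by linarith⟩
  have h₁ := ZMod.val_lt ((a : ZMod n) + c)
  have h₂ := ZMod.val_lt c
  have hn : (0 : ℤ) < n := by exact_mod_cast NeZero.pos n
  rw [abs_lt] at ha
  rw [abs_le]
  constructor <;> by_contra! h <;> nlinarith

section FreeAbelian

open Multiplicative

variable {k : ℕ} {T : Type*} [AddCommGroup T] (n : ℕ)

def reduceMod : (Fin k → ℤ) × T →+ (Fin k → ZMod n) × T :=
  (AddMonoidHom.compLeft (Int.castAddHom (ZMod n)) (Fin k)).prodMap (AddMonoidHom.id T)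

def liftMod (c : (Fin k → ZMod n) × T) : (Fin k → ℤ) × T :=
  (fun i => ((c.1 i).val : ℤ), c.2)

@[simp] lemma liftMod_zero : liftMod n (0 : (Fin k → ZMod n) × T) = 0 := by
  ext <;> simp [liftMod, ZMod.val_zero]

lemma exists_liftMod_reduceMod_add_eq [NeZero n] {a : (Fin k → ℤ) × T} (ha : ∀ i, |a.1 i| < n)
    (c : (Fin k → ZMod n) × T) :
    ∃ u : Fin k → ℤ, (∀ i, |u i| ≤ 1) ∧
      liftMod n (reduceMod n a + c) = (n • u, 0) + (a + liftMod n c) := by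
  choose u hu using fun i => exists_val_intCast_add_eq (ha i) (c.1 i)
  refine ⟨u, fun i => (hu i).1, Prod.ext (funext fun i => ?_) ?_⟩
  · change (((a.1 i : ZMod n) + c.1 i).val : ℤ) = (n • u) i + (a.1 i + ((c.1 i).val : ℤ))
    rw [(hu i).2, Pi.smul_apply, nsmul_eq_mul]
    ring
  · simp [liftMod, reduceMod]

variable {G : Type*} [Group G] [PseudoMetricSpace G] [BoundedSpace G]

lemma biInvDist_map_ofAdd_le (ψ : Multiplicative (Fin k → ℤ) →* G) (u : Fin k → ℤ) :
    biInvDist (ψ (ofAdd u)) 1 ≤ ∑ i, |u i| * biInvDist (ψ (ofAdd (Pi.single i 1))) 1 := by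
  let N : (Fin k → ℤ) → ℝ := fun v => biInvDist (ψ (ofAdd v)) 1
  have hsub := Finset.le_sum_of_subadditive N (by simp [N, biInvDist_self])
    (fun v w => by simpa [N] using biInvDist_mul_one_le _ _) Finset.univ
    (fun i => Pi.single i (u i))
  rw [Finset.univ_sum_single] at hsub
  refine hsub.trans (Finset.sum_le_sum fun i _ => ?_)
  have hsingle : Pi.single i (u i) = u i • (Pi.single i 1 : Fin k → ℤ) := by
    rw [← Pi.single_smul', smul_eq_mul, mul_one]
  simpa only [N, hsingle, ofAdd_zsmul, map_zpow] using
    biInvDist_zpow_one_le (ψ (ofAdd (Pi.single i 1))) (u i)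

lemma biInvDist_map_liftMod_reduceMod_add_le [NeZero n]
    (ι : Multiplicative ((Fin k → ℤ) × T) →* G) {a : (Fin k → ℤ) × T} (ha : ∀ i, |a.1 i| < n)
    (c : (Fin k → ZMod n) × T) :
    biInvDist (ι (ofAdd (liftMod n (reduceMod n a + c)))) (ι (ofAdd a) * ι (ofAdd (liftMod n c)))
      ≤ ∑ i, biInvDist (ι (ofAdd (Pi.single i 1, 0)) ^ n) 1 := by
  obtain ⟨u, hu, hlift⟩ := exists_liftMod_reduceMod_add_eq n ha c
  let ψ : Multiplicative (Fin k → ℤ) →* G :=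
    ι.comp ((AddMonoidHom.inl (Fin k → ℤ) T).toMultiplicative.comp (powMonoidHom n))
  have hdefect : biInvDist (ι (ofAdd (liftMod n (reduceMod n a + c))))
      (ι (ofAdd a) * ι (ofAdd (liftMod n c))) = biInvDist (ψ (ofAdd u)) 1 := by
    rw [hlift, ofAdd_add, map_mul, ofAdd_add, map_mul, biInvDist_mul_self_right]
    rfl
  rw [hdefect]
  refine (biInvDist_map_ofAdd_le ψ u).trans (Finset.sum_le_sum fun i _ => ?_)
  have hψ : ψ (ofAdd (Pi.single i 1)) = ι (ofAdd (Pi.single i 1, 0)) ^ n := by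
    change ι (ofAdd (n • Pi.single i 1, 0)) = _
    rw [← map_pow, ← ofAdd_nsmul, Prod.smul_mk, smul_zero]
  rw [hψ]
  exact mul_le_of_le_one_left (dist_nonneg.trans (dist_le_biInvDist _ _)) (by exact_mod_cast hu i)

end FreeAbelian

section Abelian

open Multiplicative DirectSum

variable {G : Type*} [Group G] [PseudoMetricSpace G] [IsTopologicalGroup G] [CompactSpace G]

theorem isResiduallyFiniteTranslation_biInvDist_of_free_prod_finite {k : ℕ} {T : Type*}
    [AddCommGroup T] [Finite T] (ι : Multiplicative ((Fin k → ℤ) × T) →* G) :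
    IsResiduallyFiniteTranslation biInvDist ι := by
  classical
  intro F δ hδ
  obtain ⟨N, hN⟩ : ∃ N : ℕ, ∀ a ∈ F, ∀ i, |(toAdd a).1 i| ≤ N :=
    ⟨F.sup fun a => Finset.univ.sup fun i => ((toAdd a).1 i).natAbs, fun a ha i => by
      rw [Int.abs_eq_natAbs, Nat.cast_le]
      exact (Finset.le_sup (f := fun i => ((toAdd a).1 i).natAbs) (Finset.mem_univ i)).trans
        (Finset.le_sup (f := fun a => Finset.univ.sup fun i => ((toAdd a).1 i).natAbs) ha)⟩
  obtain ⟨n, hNn, hn⟩ := exists_lt_forall_biInvDist_pow_le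
    (fun i => ι (ofAdd (Pi.single i 1, 0))) N (div_pos hδ (Nat.cast_add_one_pos k))
  have : NeZero n := ⟨by omega⟩
  obtain ⟨t, ht⟩ := exists_finset_forall_exists_biInvDist_le (G := G) hδ
  let ρ : Multiplicative ((Fin k → ℤ) × T) →* Equiv.Perm (((Fin k → ZMod n) × T) × t) :=
    MonoidHom.mk' (fun a => (Equiv.addLeft (reduceMod n (toAdd a))).prodCongr (Equiv.refl t))
      fun a b => by ext ⟨c, x⟩ <;> simp [add_assoc]
  refine IsApproxModel.exists_type (ρ := ρ) (ζ := fun p => ι (ofAdd (liftMod n p.1)) * p.2)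
    ⟨fun a ha ⟨c, x⟩ => ?_, fun g => ?_⟩
  · have hsmall : ∀ i, |(toAdd a).1 i| < n := fun i => (hN a ha i).trans_lt (by exact_mod_cast hNn)
    calc biInvDist (ι (ofAdd (liftMod n (reduceMod n (toAdd a) + c))) * x)
          (ι a * (ι (ofAdd (liftMod n c)) * x))
        = biInvDist (ι (ofAdd (liftMod n (reduceMod n (toAdd a) + c))))
          (ι (ofAdd (toAdd a)) * ι (ofAdd (liftMod n c))) := by
          rw [← mul_assoc, biInvDist_mul_right, ofAdd_toAdd]
      _ ≤ ∑ i : Fin k, biInvDist (ι (ofAdd (Pi.single i 1, 0)) ^ n) 1 :=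
          biInvDist_map_liftMod_reduceMod_add_le n ι hsmall c
      _ ≤ ∑ _i : Fin k, δ / (k + 1) := Finset.sum_le_sum fun i _ => hn i
      _ ≤ δ := by
          rw [Finset.sum_const, Finset.card_univ, Fintype.card_fin, nsmul_eq_mul,
            mul_div_assoc', div_le_iff₀ (Nat.cast_add_one_pos k)]
          nlinarith
  · obtain ⟨x, hx, hgx⟩ := ht g
    exact ⟨(0, ⟨x, hx⟩), by simpa using hgx⟩

theorem isResiduallyFiniteTranslation_biInvDist_of_commGroup {H : Type*} [CommGroup H]
    [Group.FG H] (ι : H →* G) : IsResiduallyFiniteTranslation biInvDist ι := by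
  have : AddGroup.FG (Additive H) := GroupFG.iff_add_fg.mp inferInstance
  obtain ⟨k, T, _, p, hp, e, ⟨φ⟩⟩ := AddCommGroup.equiv_free_prod_directSum_zmod (Additive H)
  have : ∀ i, NeZero (p i ^ e i) := fun i => ⟨pow_ne_zero _ (hp i).ne_zero⟩
  have : Finite (⨁ i, ZMod (p i ^ e i)) := Finite.of_equiv _ DFinsupp.equivFunOnFintype.symm
  let ψ : H ≃* Multiplicative ((Fin k → ℤ) × ⨁ i, ZMod (p i ^ e i)) :=
    AddEquiv.toMultiplicativeRight
      (φ.trans (Finsupp.addEquivFunOnFinite.prodCongr (AddEquiv.refl _)))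
  exact .of_comp_mulEquiv ψ (isResiduallyFiniteTranslation_biInvDist_of_free_prod_finite _)

end Abelian

theorem translation_action_on_compact_lie_group_residually_finite_general
    {G : Type*} [Group G] [MetricSpace G] [IsTopologicalGroup G]
    [CompactSpace G]
    (Γ : Subgroup G) (hfg : Group.FG ↥Γ)
    (hva : ∃ A : Subgroup ↥Γ, A.FiniteIndex ∧ ∀ a b : ↥A, a * b = b * a) :
    ∀ (F : Finset ↥Γ) (ε : ℝ), 0 < ε →
      ∃ (E : Type) (_ : Finite E) (ρ : ↥Γ →* Equiv.Perm E) (ζ : E → G),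
        (∀ f ∈ F, ∀ e : E, dist (ζ (ρ f e)) ((f : G) * ζ e) < ε) ∧
        ∀ g : G, ∃ e : E, dist g (ζ e) ≤ ε := by
  intro F ε hε
  obtain ⟨A, hA, hAcomm⟩ := hva
  let : CommGroup A := { mul_comm := hAcomm }
  have hΓ : IsResiduallyFiniteTranslation biInvDist Γ.subtype :=
    .of_finiteIndex biInvDist_mul_left A (isResiduallyFiniteTranslation_biInvDist_of_commGroup _)
  obtain ⟨E, _, ρ, ζ, hequiv, hdense⟩ := hΓ F (ε / 2) (half_pos hε)
  refine ⟨E, inferInstance, ρ, ζ, fun f hf e => ?_, fun g => ?_⟩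
  · exact (dist_le_biInvDist _ _).trans_lt ((hequiv f hf e).trans_lt (half_lt_self hε))
  · obtain ⟨e, he⟩ := hdense g
    exact ⟨e, (dist_le_biInvDist _ _).trans (he.trans (half_le_self hε.le))⟩

/-- Let `G` be a compact Lie group (a compact topological group with
a smooth manifold structure modelled on some `EuclideanSpace ℝ (Fin m)`, equipped with
a compatible metric) and let `Γ ≤ G` be a finitely generated, virtually abelian
subgroup. Then the translation action of `Γ` on `G` is residually finite. -/
theorem translation_action_on_compact_lie_group_residually_finite
    {m : ℕ} {G : Type*} [Group G] [MetricSpace G] [IsTopologicalGroup G]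
    [CompactSpace G] [ChartedSpace (EuclideanSpace ℝ (Fin m)) G]
    [LieGroup (modelWithCornersSelf ℝ (EuclideanSpace ℝ (Fin m))) (⊤ : ℕ∞) G]
    (Γ : Subgroup G) (hfg : Group.FG ↥Γ)
    (hva : ∃ A : Subgroup ↥Γ, A.FiniteIndex ∧ ∀ a b : ↥A, a * b = b * a) :
    ∀ (F : Finset ↥Γ) (ε : ℝ), 0 < ε →
      ∃ (E : Type) (_ : Finite E) (ρ : ↥Γ →* Equiv.Perm E) (ζ : E → G),
        (∀ f ∈ F, ∀ e : E, dist (ζ (ρ f e)) ((f : G) * ζ e) < ε) ∧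
        ∀ g : G, ∃ e : E, dist g (ζ e) ≤ ε :=
  translation_action_on_compact_lie_group_residually_finite_general Γ hfg hva
end

section
/- Let (X, d) be a Cantor set with a fixed metric, and let Γ be a finitely presented group. Suppose μ_i : Γ → Isom(X) are set maps (not necessarily homomorphisms) such that for all ε > 0 and every finite S ⊆ Γ there exists j such that d(μ_i(γδ)(x), μ_i(γ)(μ_i(δ)(x))) < ε for all x ∈ X, all γ, δ ∈ S, and all i ≥ j. Then there exist genuine group homomorphisms μ̃_i : Γ → Homeo(X) such that for all ε > 0 and every finite S ⊆ Γ there exists j with d(μ̃_i(γ)(x), μ_i(γ)(x)) < ε for all x ∈ X, γ ∈ S, and i ≥ j. -/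
/-- A group is finitely presented if it is isomorphic to the quotient of a finitely
generated free group by the normal closure of finitely many relations. -/
def IsFinitelyPresentedGroup (Γ : Type*) [Group Γ] : Prop :=
  ∃ (n : ℕ) (rels : Set (FreeGroup (Fin n))), rels.Finite ∧
    Nonempty (PresentedGroup rels ≃* Γ)

/-!
For `δ > 0` the `δ`-chain classes of `X` (the classes of the equivalence relation generated by
`dist x y < δ`) are open, every surjective isometry permutes them, and two isometries that are
pointwise `δ`-close induce the same permutation. When `X` is compact and totally disconnected,
chain classes have small diameter once `δ` is small. An almost-action that is `δ`-multiplicative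
on a word ball containing all relators therefore induces a map from `Γ` to permutations of the
chain classes which is multiplicative on that ball, hence agrees there with a homomorphism.
The permutations realised by isometries lift homomorphically to homeomorphisms, by transporting
every class to a chosen base class of its orbit and back. A diagonal choice of `δ` and of the
ball along the sequence gives the theorem.
-/

open Filter Function Metric Set Topology Uniformity

section ChainClass

variable {X : Type*} [PseudoMetricSpace X] {δ : ℝ}

/-- `Quot` quotients by the equivalence relation generated by `dist x y < δ`, so two points have
the same class iff they are joined by a finite `δ`-chain. -/
def ChainClass (X : Type*) [PseudoMetricSpace X] (δ : ℝ) : Type _ :=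
  Quot fun x y : X => dist x y < δ

def chainClass (δ : ℝ) : X → ChainClass X δ := Quot.mk _

theorem chainClass_eq_of_dist_lt {x y : X} (h : dist x y < δ) :
    chainClass δ x = chainClass δ y :=
  Quot.sound h

theorem eq_of_chainClass_eq {β : Type*} {f : X → β} (hf : ∀ x y, dist x y < δ → f x = f y)
    {x y : X} (h : chainClass δ x = chainClass δ y) : f x = f y :=
  congrArg (Quot.lift f hf) h

theorem isLocallyConstant_chainClass (hδ : 0 < δ) : IsLocallyConstant (chainClass (X := X) δ) :=
  (IsLocallyConstant.iff_exists_open _).2 fun x =>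
    ⟨ball x δ, isOpen_ball, mem_ball_self hδ, fun _ hy => chainClass_eq_of_dist_lt hy⟩

def chainPerm (δ : ℝ) : (X ≃ᵢ X) →* Equiv.Perm (ChainClass X δ) where
  toFun f := Quot.congr f.toEquiv fun x y => by simp [f.dist_eq]
  map_one' := by ext ⟨x⟩; rfl
  map_mul' f g := by ext ⟨x⟩; rfl

theorem chainPerm_eq_of_dist_lt {f g : X ≃ᵢ X} (h : ∀ x, dist (f x) (g x) < δ) :
    chainPerm δ f = chainPerm δ g := by
  ext ⟨x⟩
  exact chainClass_eq_of_dist_lt (h x)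

end ChainClass

theorem IsClopen.eventually_mem_iff_uniformity {Y : Type*} [UniformSpace Y] [CompactSpace Y]
    {V : Set Y} (hV : IsClopen V) : ∀ᶠ p in 𝓤 Y, p.1 ∈ V ↔ p.2 ∈ V := by
  have hopen : IsOpen {p : Y × Y | p.1 ∈ V ↔ p.2 ∈ V} := by
    have : {p : Y × Y | p.1 ∈ V ↔ p.2 ∈ V} = V ×ˢ V ∪ Vᶜ ×ˢ Vᶜ := by
      ext p; simp only [mem_ofPred_eq, mem_union, mem_prod, mem_compl_iff]; tauto
    rw [this]
    exact (hV.isOpen.prod hV.isOpen).union (hV.compl.isOpen.prod hV.compl.isOpen)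
  rw [← nhdsSet_diagonal_eq_uniformity]
  exact (hopen.mem_nhdsSet).2 fun p (hp : p.1 = p.2) => by simp [hp]

theorem exists_pos_dist_lt_of_chainClass_eq {X : Type*} [MetricSpace X] [CompactSpace X]
    [TotallyDisconnectedSpace X] {ε : ℝ} (hε : 0 < ε) :
    ∃ δ > 0, ∀ x y : X, chainClass δ x = chainClass δ y → dist x y < ε := by
  choose V hV hxV hVball using fun x : X =>
    compact_exists_isClopen_in_isOpen (isOpen_ball (x := x)) (mem_ball_self (half_pos hε))
  obtain ⟨t, ht⟩ := isCompact_univ.elim_finite_subcover V (fun x => (hV x).isOpen)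
    fun x _ => mem_iUnion.2 ⟨x, hxV x⟩
  obtain ⟨δ, hδ, hδV⟩ := mem_uniformity_dist.1
    ((eventually_all_finset t).2 fun z _ => (hV z).eventually_mem_iff_uniformity)
  refine ⟨δ, hδ, fun x y hxy => ?_⟩
  obtain ⟨z, hz, hxz⟩ := mem_iUnion₂.1 (ht (mem_univ x))
  have hyz : y ∈ V z := (eq_of_chainClass_eq (f := (· ∈ V z))
    (fun a b hab => propext (hδV hab z hz)) hxy).mp hxz
  calc dist x y ≤ dist x z + dist y z := dist_triangle_right x y z
    _ < ε / 2 + ε / 2 := add_lt_add (hVball z hxz) (hVball z hyz)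
    _ = ε := add_halves ε

section Lift

variable {X Q : Type*} [TopologicalSpace X] {p : X → Q}

/-- `T q` is meant to carry the fibre of `p` over the base point of the orbit of `q` onto the
fibre over `q`; the lift of `π` goes back to the base fibre and out to the fibre over `π q`. -/
def liftFun (p : X → Q) (T : Q → X ≃ₜ X) (π : Equiv.Perm Q) (x : X) : X :=
  T (π (p x)) ((T (p x)).symm x)

variable {H : Subgroup (Equiv.Perm Q)} {T : Q → X ≃ₜ X} {r : Q → Q}

theorem map_liftFun (hT : ∀ q y, p (T q y) = q ↔ p y = r q) (hr : ∀ π ∈ H, ∀ q, r (π q) = r q)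
    {π : Equiv.Perm Q} (hπ : π ∈ H) (x : X) : p (liftFun p T π x) = π (p x) :=
  (hT _ _).2 <| by rw [hr π hπ, ← hT, Homeomorph.apply_symm_apply]

theorem liftFun_liftFun (hT : ∀ q y, p (T q y) = q ↔ p y = r q)
    (hr : ∀ π ∈ H, ∀ q, r (π q) = r q) (π : Equiv.Perm Q) {π' : Equiv.Perm Q} (hπ' : π' ∈ H)
    (x : X) : liftFun p T π (liftFun p T π' x) = liftFun p T (π * π') x := by
  rw [liftFun, map_liftFun hT hr hπ', liftFun, Homeomorph.symm_apply_apply]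
  rfl

theorem liftFun_one (x : X) : liftFun p T 1 x = x :=
  (T (p x)).apply_symm_apply x

theorem continuous_liftFun (hp : IsLocallyConstant p) (π : Equiv.Perm Q) :
    Continuous (liftFun p T π) := by
  refine continuous_iff_continuousAt.2 fun x => ?_
  have : T (π (p x)) ∘ (T (p x)).symm =ᶠ[𝓝 x] liftFun p T π :=
    (hp.eventually_eq x).mono fun y hy => by simp only [comp_apply, liftFun, hy]
  exact ((T _).continuous.comp (T _).symm.continuous).continuousAt.congr this

theorem exists_monoidHom_lift_of_transversal (hp : IsLocallyConstant p)
    (hT : ∀ q y, p (T q y) = q ↔ p y = r q) (hr : ∀ π ∈ H, ∀ q, r (π q) = r q) :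
    ∃ Φ : H →* (X ≃ₜ X), ∀ π x, p (Φ π x) = (π : Equiv.Perm Q) (p x) := by
  have inv_cancel (π : H) (x : X) : liftFun p T (π⁻¹ : H) (liftFun p T π x) = x := by
    rw [liftFun_liftFun hT hr _ π.2, ← Subgroup.coe_mul, inv_mul_cancel, Subgroup.coe_one,
      liftFun_one]
  let Φ : H →* (X ≃ₜ X) :=
    { toFun π :=
        { toFun := liftFun p T π
          invFun := liftFun p T (π⁻¹ : H)
          left_inv := inv_cancel π
          right_inv x := by simpa using inv_cancel π⁻¹ x
          continuous_toFun := continuous_liftFun hp _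
          continuous_invFun := continuous_liftFun hp _ }
      map_one' := Homeomorph.ext liftFun_one
      map_mul' π π' := Homeomorph.ext fun x => (liftFun_liftFun hT hr _ π'.2 x).symm }
  exact ⟨Φ, fun π => map_liftFun hT hr π.2⟩

theorem Subgroup.exists_monoidHom_homeomorph_lift (hp : IsLocallyConstant p)
    (hH : ∀ π ∈ H, ∃ h : X ≃ₜ X, ∀ x, p (h x) = π (p x)) :
    ∃ Φ : H →* (X ≃ₜ X), ∀ π x, p (Φ π x) = (π : Equiv.Perm Q) (p x) := by
  let r (q : Q) : Q := (Quotient.mk (MulAction.orbitRel H Q) q).out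
  have hr : ∀ π ∈ H, ∀ q, r (π q) = r q := fun π hπ q =>
    congrArg Quotient.out (Quotient.sound ⟨⟨π, hπ⟩, rfl⟩)
  have hT (q : Q) : ∃ h : X ≃ₜ X, ∀ y, p (h y) = q ↔ p y = r q := by
    obtain ⟨π, hπ⟩ : r q ∈ MulAction.orbit H q := Quotient.mk_out (s := MulAction.orbitRel H Q) q
    obtain ⟨h, hh⟩ := hH _ (π⁻¹).2
    refine ⟨h, fun y => ?_⟩
    rw [hh, ← hπ, Subgroup.coe_inv, Equiv.Perm.inv_eq_iff_eq]
    rfl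
  choose T hT using hT
  exact exists_monoidHom_lift_of_transversal hp hT hr

end Lift

section WordBall

variable {α Γ : Type*} [Group Γ]

def wordBall (φ : FreeGroup α →* Γ) (K : ℕ) : Set Γ :=
  (fun l => φ (FreeGroup.mk l)) '' {l | l.length ≤ K}

theorem finite_wordBall [Finite α] (φ : FreeGroup α →* Γ) (K : ℕ) : (wordBall φ K).Finite :=
  (List.finite_length_le _ K).image _

theorem eventually_subset_wordBall {φ : FreeGroup α →* Γ} (hφ : Surjective φ) {S : Set Γ}
    (hS : S.Finite) : ∀ᶠ K in atTop, S ⊆ wordBall φ K := by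
  refine (hS.eventually_all).2 fun γ _ => ?_
  obtain ⟨⟨l⟩, rfl⟩ := hφ γ
  exact (eventually_ge_atTop l.length).mono fun K hK => ⟨l, hK, rfl⟩

theorem lift_mk_eq_of_mul_eq {M : Type*} [Group M] (φ : FreeGroup α →* Γ) {K : ℕ} (σ : Γ → M)
    (hσ : ∀ a ∈ wordBall φ K, ∀ b ∈ wordBall φ K, σ (a * b) = σ a * σ b)
    {l : List (α × Bool)} (hl : l.length ≤ K) :
    FreeGroup.lift (fun a => σ (φ (.of a))) (.mk l) = σ (φ (.mk l)) := by
  have hmem (l' : List (α × Bool)) (hl' : l'.length ≤ K) : φ (.mk l') ∈ wordBall φ K :=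
    ⟨l', hl', rfl⟩
  have hone : σ 1 = 1 := by
    have h1 : (1 : Γ) ∈ wordBall φ K := ⟨[], K.zero_le, map_one φ⟩
    have h := hσ 1 h1 1 h1
    rwa [mul_one, left_eq_mul] at h
  induction l using List.reverseRecOn with
  | nil => simpa [← FreeGroup.one_eq_mk] using hone.symm
  | append_singleton l x ih =>
    rw [List.length_append, List.length_singleton] at hl
    have hx : FreeGroup.lift (fun a => σ (φ (.of a))) (.mk [x]) = σ (φ (.mk [x])) := by
      obtain ⟨a, _ | _⟩ := x
      · have hof : FreeGroup.mk [(a, true)] = .of a := rfl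
        have hinv : FreeGroup.mk [(a, false)] = (.of a)⁻¹ := rfl
        have h := hσ _ (hmem [(a, true)] (by simp; omega)) _ (hmem [(a, false)] (by simp; omega))
        rw [hof, hinv, map_inv, mul_inv_cancel, hone] at h
        rw [hinv, map_inv, map_inv, FreeGroup.lift_apply_of]
        exact (eq_inv_of_mul_eq_one_right h.symm).symm
      · exact FreeGroup.lift_apply_of
    rw [← FreeGroup.mul_mk, map_mul, map_mul, ih (by omega), hx,
      hσ _ (hmem l (by omega)) _ (hmem [x] (by simp; omega))]

def presentationHom {rels : Set (FreeGroup α)} (e : PresentedGroup rels ≃* Γ) :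
    FreeGroup α →* Γ :=
  e.toMonoidHom.comp (PresentedGroup.mk rels)

theorem presentationHom_surjective {rels : Set (FreeGroup α)} (e : PresentedGroup rels ≃* Γ) :
    Surjective (presentationHom e) :=
  e.surjective.comp (PresentedGroup.mk_surjective rels)

theorem exists_monoidHom_eqOn_wordBall {M : Type*} [Group M] {rels : Set (FreeGroup α)}
    (e : PresentedGroup rels ≃* Γ) {K : ℕ} (hrels : rels ⊆ wordBall (.id _) K) (σ : Γ → M)
    (hσ : ∀ a ∈ wordBall (presentationHom e) K, ∀ b ∈ wordBall (presentationHom e) K,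
      σ (a * b) = σ a * σ b) :
    ∃ ρ : Γ →* M, EqOn ρ σ (wordBall (presentationHom e) K) := by
  have hrel : ∀ r ∈ rels, FreeGroup.lift (fun a => σ (presentationHom e (.of a))) r = 1 := by
    intro r hr
    obtain ⟨l, hl, rfl : FreeGroup.mk l = r⟩ := hrels hr
    have hr1 : presentationHom e (.mk l) = presentationHom e (.mk []) := by
      simp only [presentationHom, MonoidHom.comp_apply, PresentedGroup.one_of_mem hr,
        ← FreeGroup.one_eq_mk, map_one]
    rw [lift_mk_eq_of_mul_eq _ σ hσ hl, hr1,
      ← lift_mk_eq_of_mul_eq _ σ hσ (l := []) K.zero_le]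
    rfl
  refine ⟨(PresentedGroup.toGroup hrel).comp e.symm.toMonoidHom, ?_⟩
  rintro _ ⟨l, hl, rfl⟩
  exact (congrArg (PresentedGroup.toGroup hrel) (e.symm_apply_apply _)).trans
    (lift_mk_eq_of_mul_eq _ σ hσ hl)

end WordBall

theorem exists_monoidHom_chainClass_eq {Γ X α : Type*} [Group Γ] [PseudoMetricSpace X] {δ : ℝ}
    (hδ : 0 < δ) {rels : Set (FreeGroup α)} (e : PresentedGroup rels ≃* Γ) {K : ℕ}
    (hrels : rels ⊆ wordBall (.id _) K) (F : Γ → X ≃ᵢ X)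
    (hF : ∀ a ∈ wordBall (presentationHom e) K, ∀ b ∈ wordBall (presentationHom e) K,
      ∀ x, dist (F (a * b) x) (F a (F b x)) < δ) :
    ∃ ν : Γ →* (X ≃ₜ X), ∀ γ ∈ wordBall (presentationHom e) K, ∀ x,
      chainClass δ (ν γ x) = chainClass δ (F γ x) := by
  obtain ⟨Φ, hΦ⟩ := Subgroup.exists_monoidHom_homeomorph_lift (H := (chainPerm δ).range)
    (isLocallyConstant_chainClass (X := X) hδ)
    (by rintro _ ⟨f, rfl⟩; exact ⟨f.toHomeomorph, fun x => rfl⟩)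
  obtain ⟨ρ, hρ⟩ := exists_monoidHom_eqOn_wordBall e hrels ((chainPerm δ).rangeRestrict ∘ F)
    fun a ha b hb => by
      simp only [comp_apply, ← map_mul]
      exact Subtype.ext (chainPerm_eq_of_dist_lt (hF a ha b hb))
  refine ⟨Φ.comp ρ, fun γ hγ x => ?_⟩
  rw [MonoidHom.comp_apply, hΦ, hρ hγ]
  rfl

theorem exists_seq_monoidHom_eventually_dist_lt {Γ X α : Type*} [Group Γ] [MetricSpace X]
    [CompactSpace X] [TotallyDisconnectedSpace X] [Finite α] {rels : Set (FreeGroup α)}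
    (hrels : rels.Finite) (e : PresentedGroup rels ≃* Γ) (F : ℕ → Γ → X ≃ᵢ X)
    (hF : ∀ δ > 0, ∀ S : Finset Γ, ∀ᶠ i in atTop,
      ∀ a ∈ S, ∀ b ∈ S, ∀ x, dist (F i (a * b) x) (F i a (F i b x)) < δ)
    {ε : ℝ} (hε : 0 < ε) (S : Finset Γ) :
    ∃ ν : ℕ → Γ →* (X ≃ₜ X), ∀ᶠ i in atTop, ∀ γ ∈ S, ∀ x, dist (ν i γ x) (F i γ x) < ε := by
  obtain ⟨δ, hδ, hsmall⟩ := exists_pos_dist_lt_of_chainClass_eq (X := X) hε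
  obtain ⟨K, hSK, hrelsK⟩ :=
    ((eventually_subset_wordBall (presentationHom_surjective e) S.finite_toSet).and
      (eventually_subset_wordBall (φ := .id _) surjective_id hrels)).exists
  refine Eventually.choice
    (r := fun i (ν : Γ →* (X ≃ₜ X)) => ∀ γ ∈ S, ∀ x, dist (ν γ x) (F i γ x) < ε)
    ((hF δ hδ (finite_wordBall (presentationHom e) K).toFinset).mono fun i hi => ?_)
  obtain ⟨ν, hν⟩ := exists_monoidHom_chainClass_eq hδ e hrelsK (F i)
    fun a ha b hb => hi a (by simpa using ha) b (by simpa using hb)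
  exact ⟨ν, fun γ hγ x => hsmall _ _ (hν γ (hSK hγ) x)⟩

theorem exists_seq_forall_eventually_of_antitone {A : Type*} {p : ℕ → ℕ → A → Prop}
    (hp : ∀ i a, Antitone fun m => p m i a) (h : ∀ m, ∃ ν : ℕ → A, ∀ᶠ i in atTop, p m i (ν i)) :
    ∃ ν : ℕ → A, ∀ m, ∀ᶠ i in atTop, p m i (ν i) := by
  classical
  choose ν hν using h
  let good (i m : ℕ) : Prop := ∀ k ∈ Finset.Iic m, p k i (ν k i)
  let level (i : ℕ) : ℕ := Nat.findGreatest (good i) i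
  refine ⟨fun i => ν (level i) i, fun m₀ => ?_⟩
  filter_upwards [eventually_ge_atTop m₀, (eventually_all_finset _).2 fun k _ => hν k]
    with i hi hall
  exact hp i _ (Nat.le_findGreatest (P := good i) hi hall)
    (Nat.findGreatest_spec (P := good i) hi hall _ (Finset.mem_Iic.2 le_rfl))

theorem exists_seq_forall_eventually_of_countable {Γ A : Type*} [Countable Γ] [Nonempty Γ]
    {P : ℕ → A → Γ → ℝ → Prop} (hP : ∀ i a γ, Monotone (P i a γ))
    (h : ∀ ε > 0, ∀ S : Finset Γ, ∃ ν : ℕ → A, ∀ᶠ i in atTop, ∀ γ ∈ S, P i (ν i) γ ε) :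
    ∃ ν : ℕ → A, ∀ ε > 0, ∀ S : Finset Γ, ∀ᶠ i in atTop, ∀ γ ∈ S, P i (ν i) γ ε := by
  classical
  obtain ⟨f, hf⟩ := exists_surjective_nat Γ
  obtain ⟨ν, hν⟩ := exists_seq_forall_eventually_of_antitone
    (p := fun m i a => ∀ k ≤ m, P i a (f k) (1 / (m + 1)))
    (fun i a m m' hmm' h k hk =>
      hP i a (f k) (Nat.one_div_le_one_div hmm') (h k (hk.trans hmm')))
    fun m => (h _ Nat.one_div_pos_of_nat ((Finset.range (m + 1)).image f)).imp fun _ hν =>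
      hν.mono fun i hi k hk =>
        hi (f k) (Finset.mem_image_of_mem f (Finset.mem_range_succ_iff.2 hk))
  refine ⟨ν, fun ε hε S => ?_⟩
  obtain ⟨m, hmε, hmS⟩ : ∃ m : ℕ, 1 / ((m : ℝ) + 1) < ε ∧ ∀ γ ∈ S, ∃ k ≤ m, f k = γ :=
    ((tendsto_one_div_add_atTop_nhds_zero_nat.eventually (gt_mem_nhds hε)).and
      ((eventually_all_finset S).2 fun γ _ =>
        (eventually_ge_atTop (hf γ).choose).mono fun m hm => ⟨_, hm, (hf γ).choose_spec⟩)).exists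
  filter_upwards [hν m] with i hi γ hγ
  obtain ⟨k, hk, rfl⟩ := hmS γ hγ
  exact hP i _ _ hmε.le (hi k hk)

theorem almost_isometric_actions_perturb_to_actions_general
    {Γ X : Type*} [Group Γ] [MetricSpace X] [CompactSpace X]
    [TotallyDisconnectedSpace X]
    (hfp : IsFinitelyPresentedGroup Γ)
    (μ : ℕ → Γ → X → X)
    (hiso : ∀ (i : ℕ) (γ : Γ), Isometry (μ i γ))
    (hsurj : ∀ (i : ℕ) (γ : Γ), Function.Surjective (μ i γ))
    (happrox : ∀ ε : ℝ, 0 < ε → ∀ S : Finset Γ, ∃ j : ℕ, ∀ i ≥ j,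
      ∀ γ ∈ S, ∀ δ ∈ S, ∀ x : X, dist (μ i (γ * δ) x) (μ i γ (μ i δ x)) < ε) :
    ∃ μt : ℕ → Γ → X ≃ₜ X,
      (∀ (i : ℕ) (γ δ : Γ), μt i (γ * δ) = (μt i δ).trans (μt i γ)) ∧
      ∀ ε : ℝ, 0 < ε → ∀ S : Finset Γ, ∃ j : ℕ, ∀ i ≥ j,
        ∀ γ ∈ S, ∀ x : X, dist (μt i γ x) (μ i γ x) < ε := by
  obtain ⟨n, rels, hrels, ⟨e⟩⟩ := hfp
  let F (i : ℕ) (γ : Γ) : X ≃ᵢ X :=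
    ⟨Equiv.ofBijective _ ⟨(hiso i γ).injective, hsurj i γ⟩, hiso i γ⟩
  have : Countable Γ := (presentationHom_surjective e).countable
  obtain ⟨ν, hν⟩ := exists_seq_forall_eventually_of_countable
    (P := fun i (a : Γ →* X ≃ₜ X) γ ε => ∀ x, dist (a γ x) (μ i γ x) < ε)
    (fun _ _ _ _ _ hεε' h x => (h x).trans_le hεε')
    fun ε hε S => exists_seq_monoidHom_eventually_dist_lt hrels e F
      (fun δ hδ S => eventually_atTop.2 (happrox δ hδ S)) hε S
  exact ⟨fun i => ν i, fun i => map_mul (ν i), fun ε hε S => eventually_atTop.1 (hν ε hε S)⟩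

/-- Isometric almost-actions of a finitely presented group on a
Cantor set can be perturbed to genuine actions by homeomorphisms: if `μ i : Γ → Isom X`
are set maps which are asymptotically multiplicative (uniformly on `X`, on finite
subsets of `Γ`), then there are genuine homomorphisms `μt i : Γ → Homeo X` which
asymptotically agree with the `μ i` (uniformly on `X`, on finite subsets of `Γ`). -/
theorem almost_isometric_actions_perturb_to_actions
    {Γ X : Type*} [Group Γ] [MetricSpace X] [CompactSpace X]
    [TotallyDisconnectedSpace X] [PerfectSpace X] [Nonempty X]
    (hfp : IsFinitelyPresentedGroup Γ)
    (μ : ℕ → Γ → X → X)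
    (hiso : ∀ (i : ℕ) (γ : Γ), Isometry (μ i γ))
    (hsurj : ∀ (i : ℕ) (γ : Γ), Function.Surjective (μ i γ))
    (happrox : ∀ ε : ℝ, 0 < ε → ∀ S : Finset Γ, ∃ j : ℕ, ∀ i ≥ j,
      ∀ γ ∈ S, ∀ δ ∈ S, ∀ x : X, dist (μ i (γ * δ) x) (μ i γ (μ i δ x)) < ε) :
    ∃ μt : ℕ → Γ → X ≃ₜ X,
      (∀ (i : ℕ) (γ δ : Γ), μt i (γ * δ) = (μt i δ).trans (μt i γ)) ∧
      ∀ ε : ℝ, 0 < ε → ∀ S : Finset Γ, ∃ j : ℕ, ∀ i ≥ j,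
        ∀ γ ∈ S, ∀ x : X, dist (μt i γ x) (μ i γ x) < ε :=
  almost_isometric_actions_perturb_to_actions_general hfp μ hiso hsurj happrox
end
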